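/- arXiv:2603.09711 — 3 statements merged into one kernel-verified Lean document; each statement's English description precedes it below -/
import Mathlib

section
/- Let E be a separable real Banach space, let Iso(E) denote its group of surjective self-isometries with the topology of pointwise convergence, and let G₀ ≤ Iso(E) be the stabiliser of 0 (by the Mazur–Ulam theorem, G₀ is the group of surjective linear isometries of E). Then the following are equivalent: (1) Iso(E) is locally Roelcke precompact and the action Iso(E) ↷ E is coarsely proper; (2) G₀ is Roelcke precompact and the quotient E₁ ⫽ G₀ of the closed unit ball E₁ = {x ∈ E : ‖x‖ ≤ 1} by G₀-orbit closures is compact. -/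
set_option linter.unusedSectionVars false

open Metric MulAction Filter Set Topology Pointwise

section OrbitQuotient

variable (G : Type*) {X : Type*} [Group G] [PseudoMetricSpace X] [MulAction G X]

/-- The distance from a point `x` to the orbit of `y` under the group `G`. -/
noncomputable def orbDist (x y : X) : ℝ := ⨅ g : G, dist x (g • y)

theorem orbDist_nonneg (x y : X) : 0 ≤ orbDist G x y :=
  Real.iInf_nonneg fun _ => dist_nonneg

theorem orbDist_le (x y : X) (g : G) : orbDist G x y ≤ dist x (g • y) :=
  ciInf_le ⟨0, by rintro r ⟨g, rfl⟩; exact dist_nonneg⟩ g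

theorem orbit_nonempty (y : X) : (MulAction.orbit G y).Nonempty :=
  ⟨y, MulAction.mem_orbit_self y⟩

theorem orbDist_eq_infDist (x y : X) : orbDist G x y = Metric.infDist x (MulAction.orbit G y) := by
  haveI : Nonempty (MulAction.orbit G y) := (orbit_nonempty G y).to_subtype
  rw [Metric.infDist_eq_iInf]
  apply le_antisymm
  · refine le_ciInf fun z => ?_
    obtain ⟨g, hg⟩ := z.2
    have hg' : g • y = (z : X) := hg
    calc orbDist G x y ≤ dist x (g • y) := orbDist_le G x y g
      _ = dist x z := by rw [hg']
  · refine le_ciInf fun g => ?_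
    exact ciInf_le ⟨0, by rintro r ⟨z, rfl⟩; exact dist_nonneg⟩
      (⟨g • y, MulAction.mem_orbit y g⟩ : MulAction.orbit G y)

variable [IsIsometricSMul G X]

theorem orbDist_self (x : X) : orbDist G x x = 0 :=
  le_antisymm (by simpa using orbDist_le G x x 1) (orbDist_nonneg G x x)

theorem orbDist_comm (x y : X) : orbDist G x y = orbDist G y x := by
  have key : ∀ u v : X, orbDist G v u ≤ orbDist G u v := by
    intro u v
    refine le_ciInf fun g => ?_
    calc orbDist G v u ≤ dist v (g⁻¹ • u) := orbDist_le G v u g⁻¹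
      _ = dist (g • v) (g • g⁻¹ • u) := (dist_smul g v _).symm
      _ = dist u (g • v) := by rw [smul_inv_smul, dist_comm]
  exact le_antisymm (key y x) (key x y)

theorem orbDist_triangle (x y z : X) : orbDist G x z ≤ orbDist G x y + orbDist G y z := by
  refine le_of_forall_pos_le_add fun ε hε => ?_
  obtain ⟨g, hg⟩ : ∃ g : G, dist x (g • y) < orbDist G x y + ε / 2 :=
    exists_lt_of_ciInf_lt (by change orbDist G x y < _; linarith)
  obtain ⟨h, hh⟩ : ∃ h : G, dist y (h • z) < orbDist G y z + ε / 2 :=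
    exists_lt_of_ciInf_lt (by change orbDist G y z < _; linarith)
  calc orbDist G x z ≤ dist x ((g * h) • z) := orbDist_le G x z (g * h)
    _ ≤ dist x (g • y) + dist (g • y) ((g * h) • z) := dist_triangle _ _ _
    _ = dist x (g • y) + dist y (h • z) := by rw [mul_smul, dist_smul]
    _ ≤ orbDist G x y + ε / 2 + (orbDist G y z + ε / 2) := by linarith
    _ = orbDist G x y + orbDist G y z + ε := by ring

theorem closure_orbit_mono {u v : X} (hu : u ∈ closure (MulAction.orbit G v)) :
    closure (MulAction.orbit G u) ⊆ closure (MulAction.orbit G v) := by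
  refine closure_minimal ?_ isClosed_closure
  rintro _ ⟨g, rfl⟩
  have : g • u ∈ g • closure (MulAction.orbit G v) := Set.smul_mem_smul_set hu
  rwa [← closure_smul, MulAction.smul_orbit] at this

theorem closure_orbit_eq_of_orbDist_eq_zero {x y : X} (h : orbDist G x y = 0) :
    closure (MulAction.orbit G x) = closure (MulAction.orbit G y) := by
  have hx : x ∈ closure (MulAction.orbit G y) := by
    rw [Metric.mem_closure_iff_infDist_zero (orbit_nonempty G y), ← orbDist_eq_infDist]
    exact h
  have hy : y ∈ closure (MulAction.orbit G x) := by
    rw [Metric.mem_closure_iff_infDist_zero (orbit_nonempty G x), ← orbDist_eq_infDist,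
      ← orbDist_comm]
    exact h
  exact le_antisymm (closure_orbit_mono G hx) (closure_orbit_mono G hy)

variable (X) in
/-- Points of `X` are equivalent when they have the same orbit closure. -/
def orbSetoid : Setoid X :=
  ⟨fun x y => closure (MulAction.orbit G x) = closure (MulAction.orbit G y),
    fun _ => rfl, Eq.symm, Eq.trans⟩

variable (X) in
/-- The space `X ⫽ G` of orbit closures. -/
abbrev OrbQuot : Type _ := Quotient (orbSetoid G X)

/-- The orbit closure of a point, as an element of `X ⫽ G`. -/
abbrev OrbQuot.mk (x : X) : OrbQuot G X := Quotient.mk (orbSetoid G X) x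

theorem orbDist_congr {x x' y : X}
    (hx : closure (MulAction.orbit G x) = closure (MulAction.orbit G x')) :
    orbDist G x y = orbDist G x' y := by
  have key : ∀ u u' v : X, u ∈ closure (MulAction.orbit G u') →
      orbDist G u' v ≤ orbDist G u v := by
    intro u u' v hu
    refine le_of_forall_pos_le_add fun ε hε => ?_
    obtain ⟨g, hg⟩ : ∃ g : G, dist u (g • v) < orbDist G u v + ε / 2 :=
      exists_lt_of_ciInf_lt (by change orbDist G u v < _; linarith)
    have h00 : orbDist G u' u = 0 := by
      rw [orbDist_comm, orbDist_eq_infDist,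
        ← Metric.mem_closure_iff_infDist_zero (orbit_nonempty G u')]
      exact hu
    obtain ⟨h, hh⟩ : ∃ h : G, dist u' (h • u) < ε / 2 :=
      exists_lt_of_ciInf_lt (by change orbDist G u' u < _; rw [h00]; linarith)
    calc orbDist G u' v ≤ dist u' ((h * g) • v) := orbDist_le G u' v (h * g)
      _ ≤ dist u' (h • u) + dist (h • u) ((h * g) • v) := dist_triangle _ _ _
      _ = dist u' (h • u) + dist u (g • v) := by rw [mul_smul, dist_smul]
      _ ≤ ε / 2 + (orbDist G u v + ε / 2) := by linarith
      _ = orbDist G u v + ε := by ring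
  have h1 : x ∈ closure (MulAction.orbit G x') := by
    rw [← hx]; exact subset_closure (MulAction.mem_orbit_self x)
  have h2 : x' ∈ closure (MulAction.orbit G x) := by
    rw [hx]; exact subset_closure (MulAction.mem_orbit_self x')
  exact le_antisymm (key x' x y h2) (key x x' y h1)

noncomputable instance OrbQuot.metricSpace : MetricSpace (OrbQuot G X) where
  dist p q := orbDist G p.out q.out
  dist_self p := orbDist_self G _
  dist_comm p q := orbDist_comm G _ _
  dist_triangle p q r := orbDist_triangle G _ _ _
  eq_of_dist_eq_zero {p q} h := by
    rw [← p.out_eq, ← q.out_eq]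
    exact Quotient.sound (closure_orbit_eq_of_orbDist_eq_zero G h)

theorem OrbQuot.dist_mk (x y : X) :
    dist (OrbQuot.mk G x) (OrbQuot.mk G y) = orbDist G x y := by
  have hx : closure (MulAction.orbit G (Quotient.out (OrbQuot.mk G x))) =
      closure (MulAction.orbit G x) := Quotient.exact (Quotient.out_eq (OrbQuot.mk G x))
  have hy : closure (MulAction.orbit G (Quotient.out (OrbQuot.mk G y))) =
      closure (MulAction.orbit G y) := Quotient.exact (Quotient.out_eq (OrbQuot.mk G y))
  calc dist (OrbQuot.mk G x) (OrbQuot.mk G y)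
      = orbDist G (Quotient.out (OrbQuot.mk G x)) (Quotient.out (OrbQuot.mk G y)) := rfl
    _ = orbDist G x (Quotient.out (OrbQuot.mk G y)) := orbDist_congr G hx
    _ = orbDist G (Quotient.out (OrbQuot.mk G y)) x := orbDist_comm G _ _
    _ = orbDist G y x := orbDist_congr G hy
    _ = orbDist G x y := (orbDist_comm G _ _).symm

/-- Subgroups act isometrically whenever the ambient group does. -/
instance Subgroup.isometricSMul (H : Subgroup G) : IsIsometricSMul H X :=
  ⟨fun h => isometry_smul X (h : G)⟩

end OrbitQuotient

section GroupDefs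

variable (G : Type*) [Group G] [TopologicalSpace G]

/-- A subset `A` of a topological group is *Roelcke precompact* if for every neighbourhood `U`
of the identity there is a finite set `F` with `A ⊆ U * F * U`. -/
def RoelckePrecompactSet (A : Set G) : Prop :=
  ∀ U ∈ nhds (1 : G), ∃ F : Set G, F.Finite ∧ A ⊆ U * F * U

/-- A topological group is *locally Roelcke precompact* if the identity has a Roelcke
precompact neighbourhood. -/
def LocallyRoelckePrecompact : Prop :=
  ∃ U ∈ nhds (1 : G), RoelckePrecompactSet G U

/-- A continuous left-invariant pseudometric on a topological group. -/
structure IsContLeftInvPseudoMetric (d : G → G → ℝ) : Prop where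
  refl : ∀ x, d x x = 0
  symm : ∀ x y, d x y = d y x
  triangle : ∀ x y z, d x z ≤ d x y + d y z
  left_invariant : ∀ g x y, d (g * x) (g * y) = d x y
  continuous : Continuous fun p : G × G => d p.1 p.2

/-- A subset of a topological group is *coarsely bounded* if it is bounded with respect to
every continuous left-invariant pseudometric. -/
def CoarselyBoundedSet (B : Set G) : Prop :=
  ∀ d : G → G → ℝ, IsContLeftInvPseudoMetric G d → ∃ C, ∀ a ∈ B, ∀ b ∈ B, d a b ≤ C

/-- An isometric action of a topological group is *coarsely proper* if every set of elements
moving some point a bounded distance is coarsely bounded. -/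
def CoarselyProperSMul (X : Type*) [PseudoMetricSpace X] [SMul G X] : Prop :=
  ∀ (x : X) (r : ℝ), 0 < r → CoarselyBoundedSet G {g : G | dist x (g • x) < r}

end GroupDefs

section IsoGroup

variable (X : Type*) [MetricSpace X]

/-- The topology of pointwise convergence on the isometry group of a metric space. -/
instance IsometryEquiv.topologicalSpace : TopologicalSpace (X ≃ᵢ X) :=
  TopologicalSpace.induced (fun f => (f : X → X)) inferInstance

/-- The tautological action of the isometry group on the space. -/
instance IsometryEquiv.mulAction : MulAction (X ≃ᵢ X) X where
  smul f x := f x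
  one_smul _ := rfl
  mul_smul _ _ _ := rfl

instance IsometryEquiv.isometricSMul : IsIsometricSMul (X ≃ᵢ X) X :=
  ⟨fun f => f.isometry⟩

end IsoGroup

section BallAction

variable (E : Type*) [NormedAddCommGroup E] [NormedSpace ℝ E]

/-- An isometry of a Banach space fixing the origin preserves the closed unit ball, so the
stabiliser of `0` acts on the closed unit ball. -/
noncomputable instance stabilizerBallAction :
    MulAction (MulAction.stabilizer (E ≃ᵢ E) (0 : E)) (Metric.closedBall (0 : E) 1) where
  smul g y := ⟨(g : E ≃ᵢ E) y, by
    have h0 : (g : E ≃ᵢ E) (0 : E) = 0 := g.2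
    have hy : dist (y : E) 0 ≤ 1 := Metric.mem_closedBall.mp y.2
    refine Metric.mem_closedBall.mpr ?_
    calc dist ((g : E ≃ᵢ E) (y : E)) 0 = dist ((g : E ≃ᵢ E) (y : E)) ((g : E ≃ᵢ E) 0) := by
          rw [h0]
      _ = dist (y : E) 0 := (g : E ≃ᵢ E).isometry.dist_eq _ _
      _ ≤ 1 := hy⟩
  one_smul y := Subtype.ext rfl
  mul_smul g h y := Subtype.ext rfl

instance stabilizerBallIsometric :
    IsIsometricSMul (MulAction.stabilizer (E ≃ᵢ E) (0 : E)) (Metric.closedBall (0 : E) 1) :=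
  ⟨fun g => Isometry.of_dist_eq fun y z => by
    rw [Subtype.dist_eq, Subtype.dist_eq]
    exact (g : E ≃ᵢ E).isometry.dist_eq _ _⟩

end BallAction

section Infra

variable {E : Type*} [NormedAddCommGroup E] [NormedSpace ℝ E]

/-- Basic neighbourhood of `g₀` in the isometry group: isometries moving each point of `s`
at distance `< ε` from its `g₀`-image. -/
def bNB (g₀ : E ≃ᵢ E) (s : Finset E) (ε : ℝ) : Set (E ≃ᵢ E) :=
  {g | ∀ x ∈ s, dist (g x) (g₀ x) < ε}

/-- Basic neighbourhood of the identity. -/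
abbrev bN (s : Finset E) (ε : ℝ) : Set (E ≃ᵢ E) := bNB 1 s ε

theorem mem_bN_iff {s : Finset E} {ε : ℝ} {g : E ≃ᵢ E} :
    g ∈ bN s ε ↔ ∀ x ∈ s, dist (g x) x < ε := Iff.rfl

theorem continuous_coeFunIso : Continuous fun g : E ≃ᵢ E => (g : E → E) :=
  continuous_induced_dom

theorem continuous_evalIso (x : E) : Continuous fun g : E ≃ᵢ E => g x :=
  (continuous_apply x).comp continuous_coeFunIso

theorem bNB_mem_nhds (g₀ : E ≃ᵢ E) (s : Finset E) {ε : ℝ} (hε : 0 < ε) :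
    bNB g₀ s ε ∈ 𝓝 g₀ := by
  rw [nhds_induced (fun f : E ≃ᵢ E => (f : E → E))]
  refine Filter.mem_comap.2 ⟨{f : E → E | ∀ x ∈ s, dist (f x) (g₀ x) < ε}, ?_, fun g hg => hg⟩
  have : (↑s : Set E).pi (fun x => Metric.ball (g₀ x) ε) ∈ 𝓝 (g₀ : E → E) :=
    set_pi_mem_nhds (Finset.finite_toSet s) (fun x _ => Metric.ball_mem_nhds _ hε)
  exact Filter.mem_of_superset this fun f hf x hx => hf x (by simpa using hx)

theorem bN_mem_nhds (s : Finset E) {ε : ℝ} (hε : 0 < ε) : bN s ε ∈ 𝓝 (1 : E ≃ᵢ E) :=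
  bNB_mem_nhds 1 s hε

theorem exists_bNB_subset {g₀ : E ≃ᵢ E} {V : Set (E ≃ᵢ E)} (hV : V ∈ 𝓝 g₀) :
    ∃ (s : Finset E) (ε : ℝ), 0 < ε ∧ bNB g₀ s ε ⊆ V := by
  rw [nhds_induced (fun f : E ≃ᵢ E => (f : E → E)), Filter.mem_comap] at hV
  obtain ⟨W, hW, hWV⟩ := hV
  rw [nhds_pi, Filter.mem_pi] at hW
  obtain ⟨I, hIfin, t, ht, hsub⟩ := hW
  choose δ hδ hball using fun x => Metric.mem_nhds_iff.1 (ht x)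
  rcases hIfin.toFinset.eq_empty_or_nonempty with he | hne
  · refine ⟨hIfin.toFinset, 1, one_pos, fun g _ => hWV (hsub fun x hx => ?_)⟩
    exact absurd (hIfin.mem_toFinset.2 hx) (by simp [he])
  · obtain ⟨ε₀, hε₀pos, hε₀⟩ : ∃ ε₀, 0 < ε₀ ∧ ∀ x ∈ hIfin.toFinset, ε₀ ≤ δ x := by
      refine ⟨(hIfin.toFinset.image δ).min' (hne.image δ), ?_,
        fun x hx => Finset.min'_le _ _ (Finset.mem_image_of_mem δ hx)⟩
      obtain ⟨x, _, hxe⟩ := Finset.mem_image.1 ((hIfin.toFinset.image δ).min'_mem (hne.image δ))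
      exact hxe ▸ hδ x
    refine ⟨hIfin.toFinset, ε₀, hε₀pos, fun g hg => hWV (hsub fun x hx => ?_)⟩
    exact hball x (lt_of_lt_of_le (hg x (hIfin.mem_toFinset.2 hx)) (hε₀ x (hIfin.mem_toFinset.2 hx)))

theorem exists_bN_subset {V : Set (E ≃ᵢ E)} (hV : V ∈ 𝓝 (1 : E ≃ᵢ E)) :
    ∃ (s : Finset E) (ε : ℝ), 0 < ε ∧ bN s ε ⊆ V :=
  exists_bNB_subset hV

theorem bN_subset_bN {s s' : Finset E} {ε ε' : ℝ} (hs : s ⊆ s') (hε : ε ≤ ε') :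
    bN s' ε ⊆ bN s ε' := fun g hg x hx => lt_of_lt_of_le (hg x (hs hx)) hε

theorem inv_mem_bN {s : Finset E} {ε : ℝ} {g : E ≃ᵢ E} (h : g ∈ bN s ε) : g⁻¹ ∈ bN s ε := by
  intro x hx
  show dist (g⁻¹ x) x < ε
  have hd : dist (g⁻¹ x) x = dist (g (g⁻¹ x)) (g x) := (g.isometry.dist_eq _ _).symm
  rw [hd, IsometryEquiv.apply_inv_self, dist_comm]
  exact h x hx

theorem mul_mem_bN {s : Finset E} {ε δ : ℝ} {g h : E ≃ᵢ E}
    (hg : g ∈ bN s ε) (hh : h ∈ bN s δ) : g * h ∈ bN s (ε + δ) := by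
  intro x hx
  show dist ((g * h) x) x < ε + δ
  calc dist ((g * h) x) x ≤ dist (g (h x)) (g x) + dist (g x) x := dist_triangle _ _ _
    _ = dist (h x) x + dist (g x) x := by rw [g.isometry.dist_eq]
    _ < δ + ε := add_lt_add (hh x hx) (hg x hx)
    _ = ε + δ := add_comm _ _

/-- Translation by `v` as a surjective isometry. -/
noncomputable def TT (v : E) : E ≃ᵢ E := IsometryEquiv.addRight v

@[simp] theorem TT_apply (v x : E) : TT v x = x + v := rfl

theorem TT_mul (v w : E) : TT v * TT w = TT (v + w) := by
  ext x; simp [TT, IsometryEquiv.mul_apply, add_assoc, add_comm v w]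

@[simp] theorem TT_zero : TT (0 : E) = 1 := by ext x; simp [TT]

theorem TT_inv (v : E) : (TT v)⁻¹ = TT (-v) := by
  refine inv_eq_of_mul_eq_one_right ?_
  rw [TT_mul]; simp

theorem TT_mem_bN {v : E} {ε : ℝ} (h : ‖v‖ < ε) (s : Finset E) : TT v ∈ bN s ε := by
  intro x _
  show dist (TT v x) x < ε
  have hd : dist (TT v x) x = ‖v‖ := by simp [dist_eq_norm]
  rw [hd]; exact h

/-- A surjective isometry fixing `0` is additive (Mazur–Ulam). -/
theorem stab_add {f : E ≃ᵢ E} (hf : f 0 = 0) (x y : E) : f (x + y) = f x + f y := by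
  have hc := IsometryEquiv.coe_toRealLinearIsometryEquivOfMapZero f hf
  have := (f.toRealLinearIsometryEquivOfMapZero hf).map_add x y
  rw [hc] at this; simpa [hc] using this

/-- A surjective isometry fixing `0` is `ℝ`-homogeneous (Mazur–Ulam). -/
theorem stab_smul {f : E ≃ᵢ E} (hf : f 0 = 0) (c : ℝ) (x : E) : f (c • x) = c • f x := by
  have hc := IsometryEquiv.coe_toRealLinearIsometryEquivOfMapZero f hf
  have := (f.toRealLinearIsometryEquivOfMapZero hf).map_smul c x
  rw [hc] at this; simpa [hc] using this

theorem stab_norm {f : E ≃ᵢ E} (hf : f 0 = 0) (x : E) : ‖f x‖ = ‖x‖ := by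
  have : dist (f x) (f 0) = dist x 0 := f.isometry.dist_eq _ _
  simpa [hf, dist_eq_norm] using this

theorem TT_comm {f : E ≃ᵢ E} (hf : f 0 = 0) (v : E) : f * TT v = TT (f v) * f := by
  ext x
  simp only [IsometryEquiv.mul_apply, TT_apply]
  exact stab_add hf x v

/-- The linear part of a surjective isometry. -/
noncomputable def linp (g : E ≃ᵢ E) : E ≃ᵢ E := (TT (g 0))⁻¹ * g

theorem linp_apply (g : E ≃ᵢ E) (x : E) : linp g x = g x + -(g 0) := by
  simp [linp, TT_inv, IsometryEquiv.mul_apply]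

@[simp] theorem linp_zero (g : E ≃ᵢ E) : linp g 0 = 0 := by simp [linp_apply]

theorem linp_mem (g : E ≃ᵢ E) : linp g ∈ MulAction.stabilizer (E ≃ᵢ E) (0 : E) :=
  MulAction.mem_stabilizer_iff.2 (linp_zero g)

theorem TT_linp (g : E ≃ᵢ E) : TT (g 0) * linp g = g := by
  rw [linp, mul_inv_cancel_left]

theorem TT_mul_apply_zero (c : E) (m : E ≃ᵢ E) : (TT c * m) 0 = m 0 + c := rfl

theorem stab_coe_zero (h : ↥(MulAction.stabilizer (E ≃ᵢ E) (0 : E))) : (h : E ≃ᵢ E) 0 = 0 := h.2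

/-- Basic neighbourhoods in the stabiliser subgroup. -/
def KS (s : Finset E) (ε : ℝ) : Set ↥(MulAction.stabilizer (E ≃ᵢ E) (0 : E)) :=
  {k | (k : E ≃ᵢ E) ∈ bN s ε}

theorem continuous_stab_coe :
    Continuous fun k : ↥(MulAction.stabilizer (E ≃ᵢ E) (0 : E)) => (k : E ≃ᵢ E) :=
  continuous_subtype_val

theorem KS_mem_nhds (s : Finset E) {ε : ℝ} (hε : 0 < ε) :
    KS s ε ∈ 𝓝 (1 : ↥(MulAction.stabilizer (E ≃ᵢ E) (0 : E))) := by
  have h1 : ((1 : ↥(MulAction.stabilizer (E ≃ᵢ E) (0 : E))) : E ≃ᵢ E) = 1 := rfl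
  have := continuous_stab_coe.continuousAt
    (x := (1 : ↥(MulAction.stabilizer (E ≃ᵢ E) (0 : E))))
  exact this.preimage_mem_nhds (h1 ▸ bN_mem_nhds s hε)

theorem exists_KS_subset {N : Set ↥(MulAction.stabilizer (E ≃ᵢ E) (0 : E))}
    (hN : N ∈ 𝓝 (1 : ↥(MulAction.stabilizer (E ≃ᵢ E) (0 : E)))) :
    ∃ (s : Finset E) (ε : ℝ), 0 < ε ∧ KS s ε ⊆ N := by
  rw [nhds_subtype] at hN
  obtain ⟨V, hV, hVN⟩ := Filter.mem_comap.1 hN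
  obtain ⟨s, ε, hε, hsub⟩ := exists_bN_subset (by exact hV)
  exact ⟨s, ε, hε, fun k hk => hVN (hsub hk)⟩

theorem inv_mem_KS {s : Finset E} {ε : ℝ} {k : ↥(MulAction.stabilizer (E ≃ᵢ E) (0 : E))}
    (h : k ∈ KS s ε) : k⁻¹ ∈ KS s ε := inv_mem_bN h

theorem mul_mem_KS {s : Finset E} {ε δ : ℝ} {k l : ↥(MulAction.stabilizer (E ≃ᵢ E) (0 : E))}
    (hk : k ∈ KS s ε) (hl : l ∈ KS s δ) : k * l ∈ KS s (ε + δ) := mul_mem_bN hk hl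

theorem KS_subset_KS {s s' : Finset E} {ε ε' : ℝ} (hs : s ⊆ s') (hε : ε ≤ ε') :
    KS s' ε ⊆ KS s ε' := fun _ hg => bN_subset_bN hs hε hg

end Infra

section Proj

variable {E : Type*} [NormedAddCommGroup E] [NormedSpace ℝ E]

local notation "SG" => MulAction.stabilizer (E ≃ᵢ E) (0 : E)

theorem stab_neg {f : E ≃ᵢ E} (hf : f 0 = 0) (x : E) : f (-x) = -(f x) := by
  have h := stab_add hf x (-x)
  rw [add_neg_cancel, hf] at h
  exact eq_neg_of_add_eq_zero_right h.symm

theorem stab_sub {f : E ≃ᵢ E} (hf : f 0 = 0) (x y : E) : f (x - y) = f x - f y := by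
  rw [sub_eq_add_neg, stab_add hf, stab_neg hf, sub_eq_add_neg]

theorem linp_apply' (g : E ≃ᵢ E) (x : E) : linp g x = g x - g 0 := by
  rw [linp_apply, sub_eq_add_neg]

theorem linp_mul (g h : E ≃ᵢ E) : linp (g * h) = linp g * linp h := by
  ext x
  have hL : ∀ y : E, g y = linp g y + g 0 := by
    intro y; rw [linp_apply']; abel
  calc linp (g * h) x = g (h x) - g (h 0) := by
        rw [linp_apply']; rfl
    _ = (linp g (h x) + g 0) - (linp g (h 0) + g 0) := by rw [← hL (h x), ← hL (h 0)]
    _ = linp g (h x) - linp g (h 0) := by abel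
    _ = linp g (h x - h 0) := (stab_sub (linp_zero g) _ _).symm
    _ = linp g (linp h x) := by rw [linp_apply' h]
    _ = (linp g * linp h) x := rfl

theorem linp_of_stab {f : E ≃ᵢ E} (hf : f 0 = 0) : linp f = f := by
  ext x; rw [linp_apply', hf, sub_zero]

/-- Projection of the isometry group onto the stabiliser of `0`. -/
noncomputable def pihom (g : E ≃ᵢ E) : ↥SG := ⟨linp g, linp_mem g⟩

theorem pihom_mul (g h : E ≃ᵢ E) : pihom (g * h) = pihom g * pihom h :=
  Subtype.ext (linp_mul g h)

theorem pihom_coe (k : ↥SG) : pihom (k : E ≃ᵢ E) = k :=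
  Subtype.ext (linp_of_stab (stab_coe_zero k))

theorem continuous_linp : Continuous fun g : E ≃ᵢ E => linp g := by
  apply continuous_induced_rng.2
  show Continuous fun g : E ≃ᵢ E => ((linp g : E → E))
  apply continuous_pi
  intro x
  show Continuous fun g : E ≃ᵢ E => linp g x
  have h : (fun g : E ≃ᵢ E => linp g x) = fun g : E ≃ᵢ E => g x + -(g 0) := by
    funext g; exact linp_apply g x
  rw [h]
  exact (continuous_evalIso x).add (continuous_evalIso 0).neg

theorem continuous_pihom : Continuous fun g : E ≃ᵢ E => (pihom g : ↥SG) :=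
  continuous_linp.subtype_mk _

/-- Coarse boundedness of the stabiliser in the ambient isometry group implies that every
continuous left-invariant pseudometric on the stabiliser itself is bounded. -/
theorem stab_bounded_pseudometric
    (hCB : CoarselyBoundedSet (E ≃ᵢ E) {g : E ≃ᵢ E | dist (0 : E) (g • (0 : E)) < 1})
    (d : ↥SG → ↥SG → ℝ) (hd : IsContLeftInvPseudoMetric ↥SG d) :
    ∃ C, ∀ a b : ↥SG, d a b ≤ C := by
  set d' : (E ≃ᵢ E) → (E ≃ᵢ E) → ℝ := fun g h => d (pihom g) (pihom h) with hd'
  have hd'inst : IsContLeftInvPseudoMetric (E ≃ᵢ E) d' := by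
    constructor
    · intro x; exact hd.refl _
    · intro x y; exact hd.symm _ _
    · intro x y z; exact hd.triangle _ _ _
    · intro g x y; simp only [hd', pihom_mul]; exact hd.left_invariant _ _ _
    · exact hd.continuous.comp ((continuous_pihom.comp continuous_fst).prodMk
        (continuous_pihom.comp continuous_snd))
  obtain ⟨C, hC⟩ := hCB d' hd'inst
  refine ⟨C, fun a b => ?_⟩
  have ha : (a : E ≃ᵢ E) ∈ {g : E ≃ᵢ E | dist (0 : E) (g • (0 : E)) < 1} := by
    have : (a : E ≃ᵢ E) • (0 : E) = 0 := a.2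
    simp [this]
  have hb : (b : E ≃ᵢ E) ∈ {g : E ≃ᵢ E | dist (0 : E) (g • (0 : E)) < 1} := by
    have : (b : E ≃ᵢ E) • (0 : E) = 0 := b.2
    simp [this]
  have h2 : d (pihom (a : E ≃ᵢ E)) (pihom (b : E ≃ᵢ E)) ≤ C := hC _ ha _ hb
  rwa [pihom_coe, pihom_coe] at h2

end Proj

section QuotNet

variable {E : Type*} [NormedAddCommGroup E] [NormedSpace ℝ E]

local notation "SG" => MulAction.stabilizer (E ≃ᵢ E) (0 : E)
local notation "BX" => Metric.closedBall (0 : E) 1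

theorem smul_ball_coe (k : ↥SG) (y : BX) : ((k • y : BX) : E) = (k : E ≃ᵢ E) (y : E) := rfl

theorem orbDist_ball_le (y z : BX) (k : ↥SG) :
    orbDist ↥SG y z ≤ ‖(y : E) - (k : E ≃ᵢ E) (z : E)‖ := by
  have := orbDist_le (↥SG) y z k
  rwa [Subtype.dist_eq, smul_ball_coe, dist_eq_norm] at this

theorem exists_orbit_close {y z : BX} {c : ℝ} (h : orbDist ↥SG y z < c) :
    ∃ k : ↥SG, ‖(y : E) - (k : E ≃ᵢ E) (z : E)‖ < c := by
  haveI : Nonempty ↥SG := ⟨1⟩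
  obtain ⟨k, hk⟩ := exists_lt_of_ciInf_lt h
  refine ⟨k, ?_⟩
  rwa [Subtype.dist_eq, smul_ball_coe, dist_eq_norm] at hk

theorem orbQuot_dist_mk_le (a b : BX) :
    dist (OrbQuot.mk ↥SG a) (OrbQuot.mk ↥SG b) ≤ dist a b := by
  rw [OrbQuot.dist_mk]
  have := orbDist_le (↥SG) a b 1
  rwa [one_smul] at this

theorem orbQuot_mk_smul (k : ↥SG) (a : BX) :
    OrbQuot.mk ↥SG (k • a) = OrbQuot.mk ↥SG a :=
  Quotient.sound (by
    show closure (MulAction.orbit ↥SG (k • a)) = closure (MulAction.orbit ↥SG a)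
    rw [MulAction.orbit_smul])

variable [CompleteSpace E]

theorem quot_complete : CompleteSpace (OrbQuot ↥SG BX) := by
  haveI : CompleteSpace BX := (Metric.isClosed_closedBall (x := (0:E)) (ε := 1)).completeSpace_coe
  apply Metric.complete_of_convergent_controlled_sequences (fun n => (1/2 : ℝ)^n)
    (fun n => by positivity)
  intro u hu
  -- build representatives
  have ex : ∀ n (p : {p : BX // OrbQuot.mk ↥SG p = u n}),
      ∃ k : ↥SG, dist (p.1 : BX) (k • (u (n+1)).out) < (1/2:ℝ)^n := by
    intro n p
    have h1 : dist (u n) (u (n+1)) < (1/2:ℝ)^n := hu n n (n+1) le_rfl (Nat.le_succ n)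
    have h2 : OrbQuot.mk ↥SG ((u (n+1)).out) = u (n+1) := Quotient.out_eq _
    have hmk := OrbQuot.dist_mk (↥SG) p.1 ((u (n+1)).out)
    rw [p.2, h2] at hmk
    have key : orbDist ↥SG p.1 ((u (n+1)).out) < (1/2:ℝ)^n := by rw [← hmk]; exact h1
    haveI : Nonempty ↥SG := ⟨1⟩
    exact exists_lt_of_ciInf_lt key
  let step : ∀ n, {p : BX // OrbQuot.mk ↥SG p = u n} → {p : BX // OrbQuot.mk ↥SG p = u (n+1)} :=
    fun n p => ⟨Classical.choose (ex n p) • (u (n+1)).out,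
      by rw [orbQuot_mk_smul]; exact Quotient.out_eq _⟩
  let Y : ∀ n, {p : BX // OrbQuot.mk ↥SG p = u n} :=
    fun n => Nat.rec ⟨(u 0).out, Quotient.out_eq _⟩ step n
  have hY : ∀ n, dist (Y n).1 (Y (n+1)).1 < (1/2:ℝ)^n := by
    intro n
    exact Classical.choose_spec (ex n (Y n))
  have hcauchy : CauchySeq (fun n => (Y n).1) := by
    apply cauchySeq_of_le_geometric (1/2 : ℝ) 1 (by norm_num)
    intro n
    have := (hY n).le
    calc dist (Y n).1 (Y (n+1)).1 ≤ (1/2:ℝ)^n := this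
      _ = 1 * (1/2:ℝ)^n := (one_mul _).symm
  obtain ⟨y, hy⟩ := cauchySeq_tendsto_of_complete hcauchy
  refine ⟨OrbQuot.mk ↥SG y, ?_⟩
  have hdist : ∀ n, dist (u n) (OrbQuot.mk ↥SG y) ≤ dist (Y n).1 y := by
    intro n
    have hp : OrbQuot.mk ↥SG (Y n).1 = u n := (Y n).2
    generalize hq : (Y n).1 = yn at hp ⊢
    rw [← hp]
    exact orbQuot_dist_mk_le _ _
  have h0 : Filter.Tendsto (fun n => dist (Y n).1 y) Filter.atTop (nhds 0) :=
    tendsto_iff_dist_tendsto_zero.1 hy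
  rw [Metric.tendsto_atTop]
  intro ε hε
  rw [Metric.tendsto_atTop] at h0
  obtain ⟨N, hN⟩ := h0 ε hε
  refine ⟨N, fun n hn => ?_⟩
  have := hN n hn
  rw [Real.dist_eq, sub_zero] at this
  exact lt_of_le_of_lt (hdist n) (lt_of_abs_lt this)

theorem quotientMap_orbQuot_mk :
    Topology.IsQuotientMap (OrbQuot.mk ↥SG : BX → OrbQuot ↥SG BX) :=
  ⟨⟨rfl⟩, Quotient.mk_surjective⟩

theorem quot_topology_eq :
    (instTopologicalSpaceQuotient : TopologicalSpace (OrbQuot ↥SG BX)) =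
      UniformSpace.toTopologicalSpace := by
  apply TopologicalSpace.ext_iff.2
  intro U
  constructor
  · intro hU
    -- quotient-open implies metric-open
    have hpre : IsOpen ((OrbQuot.mk ↥SG : BX → OrbQuot ↥SG BX) ⁻¹' U) :=
      quotientMap_orbQuot_mk.isOpen_preimage.2 hU
    rw [Metric.isOpen_iff]
    intro q hq
    obtain ⟨x, rfl⟩ := quotientMap_orbQuot_mk.surjective q
    obtain ⟨r, hr, hball⟩ := Metric.isOpen_iff.1 hpre x hq
    refine ⟨r, hr, fun z hz => ?_⟩
    obtain ⟨w, rfl⟩ := quotientMap_orbQuot_mk.surjective z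
    rw [Metric.mem_ball, OrbQuot.dist_mk] at hz
    haveI : Nonempty ↥SG := ⟨1⟩
    obtain ⟨k, hk⟩ := exists_lt_of_ciInf_lt hz
    have hkx : ((k⁻¹ : ↥SG) • w : BX) ∈ Metric.ball x r := by
      rw [Metric.mem_ball]
      have hiso : dist ((k : ↥SG) • ((k⁻¹ : ↥SG) • w) : BX) ((k : ↥SG) • x) =
          dist ((k⁻¹ : ↥SG) • w : BX) x := dist_smul k _ _
      rw [smul_inv_smul] at hiso
      rw [← hiso]; exact hk
    have hU2 : OrbQuot.mk ↥SG ((k⁻¹ : ↥SG) • w) ∈ U := hball hkx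
    rwa [orbQuot_mk_smul] at hU2
  · intro hU
    -- metric-open implies quotient-open
    rw [← quotientMap_orbQuot_mk.isOpen_preimage]
    rw [Metric.isOpen_iff]
    intro x hx
    obtain ⟨r, hr, hball⟩ := Metric.isOpen_iff.1 hU (OrbQuot.mk ↥SG x) hx
    refine ⟨r, hr, fun z hz => ?_⟩
    apply hball
    rw [Metric.mem_ball] at hz ⊢
    exact lt_of_le_of_lt (orbQuot_dist_mk_le z x) hz

theorem compactSpace_congr {X : Type*} {t₁ t₂ : TopologicalSpace X} (h : t₁ = t₂) :
    @CompactSpace X t₁ ↔ @CompactSpace X t₂ := by subst h; exact Iff.rfl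

theorem net_of_compact (hcpt : CompactSpace (OrbQuot ↥SG BX)) {ε : ℝ} (hε : 0 < ε) :
    ∃ J : Finset BX, ∀ v : BX, ∃ u ∈ J, ∃ k : ↥SG,
      ‖(v : E) - (k : E ≃ᵢ E) (u : E)‖ < ε := by
  have hcptm : @CompactSpace (OrbQuot ↥SG BX) UniformSpace.toTopologicalSpace :=
    (compactSpace_congr quot_topology_eq).1 hcpt
  have htb : TotallyBounded (Set.univ : Set (OrbQuot ↥SG BX)) :=
    (@isCompact_univ (OrbQuot ↥SG BX) UniformSpace.toTopologicalSpace hcptm).totallyBounded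
  rw [Metric.totallyBounded_iff] at htb
  obtain ⟨t, htfin, hcov⟩ := htb ε hε
  refine ⟨(htfin.image Quotient.out).toFinset, fun v => ?_⟩
  have hv : OrbQuot.mk ↥SG v ∈ ⋃ y ∈ t, Metric.ball y ε := hcov (Set.mem_univ _)
  obtain ⟨q, hq, hqball⟩ := Set.mem_iUnion₂.1 hv
  have hout : OrbQuot.mk ↥SG q.out = q := Quotient.out_eq q
  rw [Metric.mem_ball, ← hout, OrbQuot.dist_mk] at hqball
  obtain ⟨k, hk⟩ := exists_orbit_close hqball
  exact ⟨q.out, (Set.Finite.mem_toFinset _).2 ⟨q, hq, rfl⟩, k, hk⟩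

theorem compact_of_net
    (hnet : ∀ ε : ℝ, 0 < ε → ∃ J : Finset BX, ∀ v : BX, ∃ u ∈ J, ∃ k : ↥SG,
      ‖(v : E) - (k : E ≃ᵢ E) (u : E)‖ < ε) :
    CompactSpace (OrbQuot ↥SG BX) := by
  haveI := quot_complete (E := E)
  refine (compactSpace_congr quot_topology_eq).2 ?_
  refine @CompactSpace.mk _ UniformSpace.toTopologicalSpace ?_
  rw [isCompact_iff_totallyBounded_isComplete]
  constructor
  · rw [Metric.totallyBounded_iff]
    intro ε hε
    obtain ⟨J, hJ⟩ := hnet ε hε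
    refine ⟨(fun u => OrbQuot.mk ↥SG u) '' ↑J, (J.finite_toSet.image _), ?_⟩
    intro q _
    obtain ⟨u, hu, k, hk⟩ := hJ q.out
    refine Set.mem_iUnion₂.2 ⟨OrbQuot.mk ↥SG u, Set.mem_image_of_mem _ hu, ?_⟩
    rw [Metric.mem_ball, ← Quotient.out_eq q, OrbQuot.dist_mk]
    exact lt_of_le_of_lt (orbDist_ball_le _ _ k) hk
  · exact completeSpace_iff_isComplete_univ.1 (by infer_instance)

end QuotNet

section Backward

variable {E : Type*} [NormedAddCommGroup E] [NormedSpace ℝ E]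

local notation "SG" => MulAction.stabilizer (E ≃ᵢ E) (0 : E)
local notation "BX" => Metric.closedBall (0 : E) 1

theorem d1_mul {d : (E ≃ᵢ E) → (E ≃ᵢ E) → ℝ} (hd : IsContLeftInvPseudoMetric (E ≃ᵢ E) d)
    (a b : E ≃ᵢ E) : d 1 (a * b) ≤ d 1 a + d 1 b := by
  have h := hd.left_invariant a 1 b
  rw [mul_one] at h
  calc d 1 (a * b) ≤ d 1 a + d a (a * b) := hd.triangle _ _ _
    _ = d 1 a + d 1 b := by rw [h]

theorem d1_pow {d : (E ≃ᵢ E) → (E ≃ᵢ E) → ℝ} (hd : IsContLeftInvPseudoMetric (E ≃ᵢ E) d)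
    (a : E ≃ᵢ E) : ∀ n : ℕ, d 1 (a ^ n) ≤ n * d 1 a := by
  intro n
  induction n with
  | zero => simp [pow_zero]; rw [hd.refl]
  | succ n ih =>
    rw [pow_succ]
    calc d 1 (a ^ n * a) ≤ d 1 (a ^ n) + d 1 a := d1_mul hd _ _
      _ ≤ n * d 1 a + d 1 a := by
          have h0 : 0 ≤ d 1 a := by
            have := hd.triangle 1 a 1
            rw [hd.refl, hd.symm a 1] at this
            linarith
          linarith
      _ = (n + 1 : ℕ) * d 1 a := by push_cast; ring

theorem TT_pow (w : E) : ∀ n : ℕ, (TT w) ^ n = TT ((n : ℝ) • w)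
  | 0 => by simp [pow_zero]
  | n + 1 => by
    rw [pow_succ, TT_pow w n, TT_mul]
    congr 1
    push_cast
    rw [add_smul, one_smul]

/-- The (⇐) direction: coarse properness. -/
theorem cp_of_rhs (hRP : RoelckePrecompactSet (G := ↥SG) (Set.univ : Set ↥SG)) :
    CoarselyProperSMul (E ≃ᵢ E) E := by
  intro x r hr d hd
  -- small neighbourhood where d 1 · ≤ 1
  have hopen : {p : (E ≃ᵢ E) × (E ≃ᵢ E) | d p.1 p.2 < 1} ∈ nhds (1, 1) := by
    have : IsOpen {p : (E ≃ᵢ E) × (E ≃ᵢ E) | d p.1 p.2 < 1} :=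
      isOpen_lt hd.continuous continuous_const
    exact this.mem_nhds (by simp [hd.refl])
  rw [mem_nhds_prod_iff] at hopen
  obtain ⟨V₁, hV₁, V₂, hV₂, hV⟩ := hopen
  obtain ⟨s₂, ε₂, hε₂, hs₂⟩ := exists_bN_subset hV₂
  have hsmall : ∀ u ∈ bN s₂ ε₂, d 1 u < 1 := by
    intro u hu
    have : ((1 : E ≃ᵢ E), u) ∈ V₁ ×ˢ V₂ := ⟨mem_of_mem_nhds hV₁, hs₂ hu⟩
    exact hV this
  -- translation bound
  have hTTb : ∀ v : E, d 1 (TT v) ≤ (⌈‖v‖ / ε₂⌉₊ + 1 : ℕ) := by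
    intro v
    set n : ℕ := ⌈‖v‖ / ε₂⌉₊ + 1 with hn
    have hnpos : 0 < (n : ℝ) := by positivity
    have hlt : ‖v‖ / ε₂ < n := by
      calc ‖v‖ / ε₂ ≤ ⌈‖v‖ / ε₂⌉₊ := Nat.le_ceil _
        _ < n := by exact_mod_cast Nat.lt_succ_self _
    set w : E := (n : ℝ)⁻¹ • v with hw
    have hwnorm : ‖w‖ < ε₂ := by
      rw [hw, norm_smul, norm_inv, Real.norm_natCast]
      rw [div_lt_iff₀ hε₂] at hlt
      calc (n : ℝ)⁻¹ * ‖v‖ < (n : ℝ)⁻¹ * (ε₂ * n) := by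
            apply mul_lt_mul_of_pos_left _ (by positivity)
            linarith [hlt]
        _ = ε₂ := by field_simp
    have hTv : TT v = (TT w) ^ n := by
      rw [TT_pow, hw, smul_smul]
      congr 1
      rw [mul_inv_cancel₀ (ne_of_gt hnpos), one_smul]
    calc d 1 (TT v) = d 1 ((TT w) ^ n) := by rw [hTv]
      _ ≤ n * d 1 (TT w) := d1_pow hd _ n
      _ ≤ n * 1 := by
          apply mul_le_mul_of_nonneg_left _ (by positivity)
          exact (hsmall _ (TT_mem_bN hwnorm s₂)).le
      _ = n := mul_one _
  -- stabiliser bound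
  have hN : {k : ↥SG | d 1 (k : E ≃ᵢ E) < 1} ∈ nhds (1 : ↥SG) := by
    have hc : Continuous fun k : ↥SG => d 1 (k : E ≃ᵢ E) :=
      hd.continuous.comp (continuous_const.prodMk continuous_stab_coe)
    have : IsOpen {k : ↥SG | d 1 (k : E ≃ᵢ E) < 1} := isOpen_lt hc continuous_const
    refine this.mem_nhds ?_
    show d 1 ((1 : ↥SG) : E ≃ᵢ E) < 1
    rw [show ((1 : ↥SG) : E ≃ᵢ E) = 1 from rfl, hd.refl]; norm_num
  obtain ⟨F, hFfin, hFcov⟩ := hRP _ hN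
  have hFne : F.Nonempty := by
    by_contra hne
    rw [Set.not_nonempty_iff_eq_empty] at hne
    have : (1 : ↥SG) ∈ {k : ↥SG | d 1 (k : E ≃ᵢ E) < 1} * F * {k : ↥SG | d 1 (k : E ≃ᵢ E) < 1} :=
      hFcov (Set.mem_univ 1)
    rw [hne] at this
    simp at this
  obtain ⟨C₁, hC₁⟩ : ∃ C₁, ∀ f ∈ F, d 1 (f : E ≃ᵢ E) ≤ C₁ := by
    obtain ⟨C₁, hC₁⟩ := (hFfin.image (fun f : ↥SG => d 1 (f : E ≃ᵢ E))).bddAbove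
    exact ⟨C₁, fun f hf => hC₁ (Set.mem_image_of_mem _ hf)⟩
  have hstab : ∀ k : ↥SG, d 1 (k : E ≃ᵢ E) ≤ 2 + C₁ := by
    intro k
    have hk := hFcov (Set.mem_univ k)
    obtain ⟨a, ha, c, hc, hac⟩ := hk
    obtain ⟨n₁, hn₁, f, hf, hnf⟩ := ha
    have hkeq : (k : E ≃ᵢ E) = (n₁ : E ≃ᵢ E) * (f : E ≃ᵢ E) * (c : E ≃ᵢ E) := by
      rw [← hac, ← hnf]; rfl
    rw [hkeq]
    calc d 1 ((n₁ : E ≃ᵢ E) * (f : E ≃ᵢ E) * (c : E ≃ᵢ E))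
        ≤ d 1 ((n₁ : E ≃ᵢ E) * (f : E ≃ᵢ E)) + d 1 (c : E ≃ᵢ E) := d1_mul hd _ _
      _ ≤ d 1 (n₁ : E ≃ᵢ E) + d 1 (f : E ≃ᵢ E) + d 1 (c : E ≃ᵢ E) :=
          add_le_add_left (d1_mul hd _ _) _
      _ ≤ 1 + C₁ + 1 := by
          have h1 : d 1 (n₁ : E ≃ᵢ E) ≤ 1 := le_of_lt hn₁
          have h2 : d 1 (c : E ≃ᵢ E) ≤ 1 := le_of_lt hc
          have h3 : d 1 (f : E ≃ᵢ E) ≤ C₁ := hC₁ f hf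
          linarith
      _ = 2 + C₁ := by ring
  -- assemble
  set T : ℝ := (⌈(r + 2 * ‖x‖) / ε₂⌉₊ + 1 : ℕ) + (2 + C₁) with hT
  refine ⟨2 * T, fun a ha b hb => ?_⟩
  have hbound : ∀ g ∈ {g : E ≃ᵢ E | dist x (g • x) < r}, d 1 g ≤ T := by
    intro g hg
    have hgx : dist x (g x) < r := hg
    have hg0 : ‖g 0‖ ≤ r + 2 * ‖x‖ := by
      have h1 : dist (g 0) (g x) = dist (0 : E) x := g.isometry.dist_eq _ _
      calc ‖g 0‖ = dist (g 0) 0 := by rw [dist_zero_right]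
        _ ≤ dist (g 0) (g x) + dist (g x) x + dist x 0 := dist_triangle4 _ _ _ _
        _ = dist (0 : E) x + dist (g x) x + dist x 0 := by rw [h1]
        _ ≤ ‖x‖ + r + ‖x‖ := by
            rw [dist_comm (g x) x]
            have := hgx
            rw [dist_zero_left, dist_zero_right]
            linarith
        _ = r + 2 * ‖x‖ := by ring
    have hdecomp : g = TT (g 0) * linp g := (TT_linp g).symm
    calc d 1 g = d 1 (TT (g 0) * linp g) := by rw [← hdecomp]
      _ ≤ d 1 (TT (g 0)) + d 1 (linp g) := d1_mul hd _ _
      _ ≤ (⌈‖g 0‖ / ε₂⌉₊ + 1 : ℕ) + (2 + C₁) := by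
          have h2 : d 1 (linp g) ≤ 2 + C₁ := hstab (pihom g)
          exact add_le_add (hTTb _) h2
      _ ≤ T := by
          rw [hT]
          have hmono : (⌈‖g 0‖ / ε₂⌉₊ : ℝ) ≤ (⌈(r + 2 * ‖x‖) / ε₂⌉₊ : ℕ) := by
            have : ⌈‖g 0‖ / ε₂⌉₊ ≤ ⌈(r + 2 * ‖x‖) / ε₂⌉₊ :=
              Nat.ceil_le_ceil (by gcongr)
            exact_mod_cast this
          push_cast
          push_cast at hmono
          linarith
  have hda : d 1 a ≤ T := hbound a ha
  have hdb : d 1 b ≤ T := hbound b hb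
  calc d a b ≤ d a 1 + d 1 b := hd.triangle _ _ _
    _ = d 1 a + d 1 b := by rw [hd.symm a 1]
    _ ≤ 2 * T := by linarith

end Backward

section BackwardLRP

variable {E : Type*} [NormedAddCommGroup E] [NormedSpace ℝ E] [CompleteSpace E]

local notation "SG" => MulAction.stabilizer (E ≃ᵢ E) (0 : E)
local notation "BX" => Metric.closedBall (0 : E) 1

/-- The (⇐) direction: local Roelcke precompactness. -/
theorem lrp_of_rhs (hRP : RoelckePrecompactSet (G := ↥SG) (Set.univ : Set ↥SG))
    (hcpt : CompactSpace (OrbQuot ↥SG BX)) :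
    LocallyRoelckePrecompact (E ≃ᵢ E) := by
  classical
  refine ⟨bN ({0} : Finset E) 1, bN_mem_nhds _ one_pos, ?_⟩
  intro V hV
  obtain ⟨s₀, ε₀, hε₀, hs₀V⟩ := exists_bN_subset hV
  set s' : Finset E := insert 0 s₀ with hs'
  set ε : ℝ := min ε₀ 1 with hε
  have hεpos : 0 < ε := lt_min hε₀ one_pos
  have hε1 : ε ≤ 1 := min_le_right _ _
  have hsV : bN s' ε ⊆ V := fun g hg =>
    hs₀V (bN_subset_bN (Finset.subset_insert 0 s₀) (min_le_left _ _) hg)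
  set ε₁ : ℝ := ε / 8 with hε₁
  have hε₁pos : 0 < ε₁ := by positivity
  -- net from compact quotient
  obtain ⟨J, hJ⟩ := net_of_compact hcpt hε₁pos
  set sJ : Finset E := s' ∪ J.image Subtype.val with hsJ
  have hs'sJ : s' ⊆ sJ := Finset.subset_union_left
  -- first decomposition of the stabiliser
  obtain ⟨FA, hFAfin, hFAcov⟩ := hRP (KS sJ ε₁) (KS_mem_nhds sJ hε₁pos)
  -- the finitely many vectors
  set csS : Set E := (fun p : ↥SG × BX => (p.1 : E ≃ᵢ E) (p.2 : E)) '' (FA ×ˢ (↑J : Set BX))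
    with hcsS
  have hcsfin : csS.Finite := (hFAfin.prod J.finite_toSet).image _
  set s₂ : Finset E := sJ ∪ hcsfin.toFinset with hs₂
  have hsJs₂ : sJ ⊆ s₂ := Finset.subset_union_left
  -- second decomposition of the stabiliser
  obtain ⟨FW, hFWfin, hFWcov⟩ := hRP (KS s₂ ε₁) (KS_mem_nhds s₂ hε₁pos)
  -- the finite middle set
  set F : Set (E ≃ᵢ E) :=
    (fun p : (↥SG × BX) × ↥SG => TT ((p.1.1 : E ≃ᵢ E) (p.1.2 : E)) * (p.2 : E ≃ᵢ E)) ''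
      ((FA ×ˢ (↑J : Set BX)) ×ˢ FW) with hF
  refine ⟨F, ((hFAfin.prod J.finite_toSet).prod hFWfin).image _, ?_⟩
  intro g hg
  -- the vector moved
  have hv1 : dist (g 0) ((1 : E ≃ᵢ E) 0) < 1 := hg 0 (Finset.mem_singleton_self 0)
  have hvnorm : ‖g 0‖ < 1 := by
    rw [show ((1 : E ≃ᵢ E) 0) = (0 : E) from rfl, dist_zero_right] at hv1
    exact hv1
  set v : E := g 0 with hv
  have hvball : v ∈ BX := by
    rw [Metric.mem_closedBall, dist_zero_right]
    exact hvnorm.le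
  obtain ⟨u, huJ, h, hhu⟩ := hJ ⟨v, hvball⟩
  -- decompose h
  obtain ⟨ab, hab, n₁', hn₁', habn⟩ := hFAcov (Set.mem_univ h)
  obtain ⟨n₁, hn₁, fa, hfa, hnf⟩ := hab
  set c : E := (fa : E ≃ᵢ E) (u : E) with hc
  have hccs : c ∈ csS := ⟨(fa, u), ⟨hfa, Finset.mem_coe.2 huJ⟩, rfl⟩
  have hcs₂ : c ∈ s₂ := Finset.mem_union_right _ (hcsfin.mem_toFinset.2 hccs)
  have husJ : (u : E) ∈ sJ :=
    Finset.mem_union_right _ (Finset.mem_image_of_mem Subtype.val huJ)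
  -- v is close to n₁ c
  have hvc : ‖v - (n₁ : E ≃ᵢ E) c‖ < 2 * ε₁ := by
    have h1 : ‖v - (h : E ≃ᵢ E) (u : E)‖ < ε₁ := hhu
    have heq : (h : E ≃ᵢ E) (u : E) = (n₁ : E ≃ᵢ E) ((fa : E ≃ᵢ E) ((n₁' : E ≃ᵢ E) (u : E))) := by
      rw [← habn, ← hnf]; rfl
    have h2 : ‖(h : E ≃ᵢ E) (u : E) - (n₁ : E ≃ᵢ E) c‖ < ε₁ := by
      rw [heq, hc, ← dist_eq_norm]
      have e1 : dist ((n₁ : E ≃ᵢ E) ((fa : E ≃ᵢ E) ((n₁' : E ≃ᵢ E) (u : E))))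
          ((n₁ : E ≃ᵢ E) ((fa : E ≃ᵢ E) (u : E)))
          = dist ((n₁' : E ≃ᵢ E) (u : E)) (u : E) := by
        rw [(n₁ : E ≃ᵢ E).isometry.dist_eq, (fa : E ≃ᵢ E).isometry.dist_eq]
      rw [e1]
      exact hn₁' (u : E) husJ
    calc ‖v - (n₁ : E ≃ᵢ E) c‖
        ≤ ‖v - (h : E ≃ᵢ E) (u : E)‖ + ‖(h : E ≃ᵢ E) (u : E) - (n₁ : E ≃ᵢ E) c‖ := by
          have := norm_sub_le_norm_sub_add_norm_sub v ((h : E ≃ᵢ E) (u : E)) ((n₁ : E ≃ᵢ E) c)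
          exact this
      _ < ε₁ + ε₁ := add_lt_add h1 h2
      _ = 2 * ε₁ := by ring
  set δ : E := v - (n₁ : E ≃ᵢ E) c with hδ
  -- decompose k
  set Lsub : ↥SG := pihom g with hLsub
  set k : ↥SG := n₁⁻¹ * Lsub with hk
  obtain ⟨rf, hrf, r', hr', hrfr⟩ := hFWcov (Set.mem_univ k)
  obtain ⟨rr, hrr, fw, hfw, hrw⟩ := hrf
  -- names in the isometry group
  set a : E ≃ᵢ E := (n₁ : E ≃ᵢ E) with hax
  set b : E ≃ᵢ E := (rr : E ≃ᵢ E) with hbx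
  set w : E ≃ᵢ E := (fw : E ≃ᵢ E) with hwx
  set q : E ≃ᵢ E := (r' : E ≃ᵢ E) with hqx
  have ha0 : a 0 = 0 := stab_coe_zero n₁
  have hb0 : b 0 = 0 := stab_coe_zero rr
  set e : E := b⁻¹ c - c with he
  have henorm : ‖e‖ < ε₁ := by
    have e1 : dist (b⁻¹ c) c = dist (b (b⁻¹ c)) (b c) := (b.isometry.dist_eq _ _).symm
    rw [he, ← dist_eq_norm, e1, IsometryEquiv.apply_inv_self, dist_comm]
    exact hrr c hcs₂
  -- the key algebraic identity
  have hkcoe : a⁻¹ * linp g = b * w * q := by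
    have : (k : E ≃ᵢ E) = b * w * q := by rw [← hrfr, ← hrw]; rfl
    rw [← this, hk]; rfl
  have hvsum : δ + a c = v := by rw [hδ]; abel
  have hesum : e + c = b⁻¹ c := by rw [he]; abel
  have hgeq : g = (TT δ * a * b * TT e) * (TT c * w) * q := by
    have step1 : g = TT v * (a * (a⁻¹ * linp g)) := by
      rw [mul_inv_cancel_left]
      exact (TT_linp g).symm
    rw [step1, hkcoe, ← hvsum, ← TT_mul]
    have step2 : TT (a c) * a = a * TT c := (TT_comm ha0 c).symm
    have step3 : TT c * b = b * TT (b⁻¹ c) := by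
      rw [TT_comm hb0 (b⁻¹ c), IsometryEquiv.apply_inv_self]
    have step4 : TT (b⁻¹ c) = TT e * TT c := by rw [TT_mul, hesum]
    calc TT δ * TT (a c) * (a * (b * w * q))
        = TT δ * (TT (a c) * a) * (b * w * q) := by
          simp only [mul_assoc]
      _ = TT δ * (a * TT c) * (b * w * q) := by rw [step2]
      _ = TT δ * a * (TT c * b) * (w * q) := by simp only [mul_assoc]
      _ = TT δ * a * (b * TT (b⁻¹ c)) * (w * q) := by rw [step3]
      _ = TT δ * a * (b * (TT e * TT c)) * (w * q) := by rw [step4]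
      _ = (TT δ * a * b * TT e) * (TT c * w) * q := by simp only [mul_assoc]
  -- memberships
  have hPmem : TT δ * a * b * TT e ∈ V := by
    apply hsV
    have h1 : TT δ ∈ bN s' (2 * ε₁) := TT_mem_bN hvc s'
    have h2 : a ∈ bN s' (2 * ε₁) := by
      intro x hx
      show dist (a x) x < 2 * ε₁
      have hx2 : dist (a x) x < ε₁ := hn₁ x (hs'sJ hx)
      linarith
    have h3 : b ∈ bN s' (2 * ε₁) := by
      intro x hx
      show dist (b x) x < 2 * ε₁
      have hx3 : dist (b x) x < ε₁ := hrr x (hsJs₂ (hs'sJ hx))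
      linarith
    have h4 : TT e ∈ bN s' (2 * ε₁) := TT_mem_bN (by linarith) s'
    have := mul_mem_bN (mul_mem_bN (mul_mem_bN h1 h2) h3) h4
    have hsum : 2 * ε₁ + 2 * ε₁ + 2 * ε₁ + 2 * ε₁ = ε := by
      rw [hε₁]; ring
    rwa [hsum] at this
  have hmid : TT c * w ∈ F := ⟨((fa, u), fw), ⟨⟨hfa, Finset.mem_coe.2 huJ⟩, hfw⟩, rfl⟩
  have hqmem : q ∈ V := by
    apply hsV
    intro x hx
    show dist (q x) x < ε
    have hx4 : dist (q x) x < ε₁ := hr' x (hsJs₂ (hs'sJ hx))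
    rw [hε₁] at hx4
    linarith
  rw [hgeq]
  exact Set.mul_mem_mul (Set.mul_mem_mul hPmem hmid) hqmem

end BackwardLRP

section ForwardQuot

variable {E : Type*} [NormedAddCommGroup E] [NormedSpace ℝ E] [CompleteSpace E]

local notation "SG" => MulAction.stabilizer (E ≃ᵢ E) (0 : E)
local notation "BX" => Metric.closedBall (0 : E) 1

/-- The (⇒) direction for the quotient: local Roelcke precompactness of the isometry group
implies the quotient of the unit ball is compact. -/
theorem rhs2_of_lhs (hLRP : LocallyRoelckePrecompact (E ≃ᵢ E)) :
    CompactSpace (OrbQuot ↥SG BX) := by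
  classical
  obtain ⟨U, hU, hURP⟩ := hLRP
  obtain ⟨s₀, ε₀, hε₀, hs₀U⟩ := exists_bN_subset hU
  apply compact_of_net
  intro ε hε
  set δ : ℝ := min ε₀ 1 with hδdef
  have hδpos : 0 < δ := lt_min hε₀ one_pos
  have hδ1 : δ ≤ 1 := min_le_right _ _
  have hδε₀ : δ ≤ ε₀ := min_le_left _ _
  set ε'' : ℝ := δ * ε / 16 with hε''def
  have hε''pos : 0 < ε'' := by positivity
  -- decompose U
  obtain ⟨F, hFfin, hFcov⟩ := hURP (bN ({0} : Finset E) ε'') (bN_mem_nhds _ hε''pos)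
  -- normalisation map
  set nrm : E → E := fun y => if ‖y‖ ≤ δ / 2 then y else ((δ / 2) / ‖y‖) • y with hnrm
  have hnrm_norm : ∀ y : E, ‖nrm y‖ ≤ δ / 2 := by
    intro y
    rw [hnrm]
    by_cases hy : ‖y‖ ≤ δ / 2
    · simpa [hy] using hy
    · push_neg at hy
      have hy0 : ‖y‖ ≠ 0 := (lt_trans (by positivity : (0:ℝ) < δ / 2) hy).ne' 
      simp only [if_neg (not_le.2 hy), norm_smul, Real.norm_eq_abs]
      rw [abs_of_nonneg (by positivity), div_mul_cancel₀ _ hy0]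
  have hnrm_close : ∀ y : E, ‖y‖ ≤ δ / 2 + 2 * ε'' → ‖y - nrm y‖ ≤ 2 * ε'' := by
    intro y hy
    rw [hnrm]
    by_cases h : ‖y‖ ≤ δ / 2
    · simp [h, hε''pos.le]
    · push_neg at h
      have hy0 : ‖y‖ ≠ 0 := (lt_trans (by positivity : (0:ℝ) < δ / 2) h).ne' 
      simp only [if_neg (not_le.2 h)]
      have : y - ((δ / 2) / ‖y‖) • y = (1 - (δ / 2) / ‖y‖) • y := by
        rw [sub_smul, one_smul]
      rw [this, norm_smul, Real.norm_eq_abs]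
      have hfrac : (δ / 2) / ‖y‖ ≤ 1 := by
        rw [div_le_one (by positivity)]; exact h.le
      rw [abs_of_nonneg (by linarith)]
      have heq : (1 - (δ / 2) / ‖y‖) * ‖y‖ = ‖y‖ - δ / 2 := by
        rw [sub_mul, one_mul, div_mul_cancel₀ _ hy0]
      rw [heq]
      linarith
  -- the candidate centres
  have hball : ∀ f : E ≃ᵢ E, (2 / δ) • nrm (f 0) ∈ BX := by
    intro f
    rw [Metric.mem_closedBall, dist_zero_right, norm_smul, Real.norm_eq_abs,
      abs_of_nonneg (by positivity)]
    calc 2 / δ * ‖nrm (f 0)‖ ≤ 2 / δ * (δ / 2) := by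
          apply mul_le_mul_of_nonneg_left (hnrm_norm _) (by positivity)
      _ = 1 := by field_simp
  set Φ : (E ≃ᵢ E) → BX := fun f => ⟨(2 / δ) • nrm (f 0), hball f⟩ with hΦ
  refine ⟨(hFfin.image Φ).toFinset, ?_⟩
  intro v
  -- scale down
  set w : E := (δ / 2) • (v : E) with hw
  have hvnorm : ‖(v : E)‖ ≤ 1 := by
    have := v.2
    rwa [Metric.mem_closedBall, dist_zero_right] at this
  have hwnorm : ‖w‖ ≤ δ / 2 := by
    rw [hw, norm_smul, Real.norm_eq_abs, abs_of_nonneg (by positivity)]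
    calc δ / 2 * ‖(v : E)‖ ≤ δ / 2 * 1 := by
          apply mul_le_mul_of_nonneg_left hvnorm (by positivity)
      _ = δ / 2 := mul_one _
  have hTTw : TT w ∈ U := hs₀U (TT_mem_bN (lt_of_le_of_lt hwnorm (by linarith)) s₀)
  obtain ⟨ab, hab, v₂, hv₂, habv⟩ := hFcov hTTw
  obtain ⟨v₁, hv₁, f, hf, hvf⟩ := hab
  have habv' : ab * v₂ = TT w := habv
  have hvf' : v₁ * f = ab := hvf
  -- extract the approximation
  have ha₁ : ‖v₁ 0‖ < ε'' := by
    have := hv₁ 0 (Finset.mem_singleton_self 0)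
    rwa [show ((1 : E ≃ᵢ E) 0) = (0 : E) from rfl, dist_zero_right] at this
  have ha₂ : ‖v₂ 0‖ < ε'' := by
    have := hv₂ 0 (Finset.mem_singleton_self 0)
    rwa [show ((1 : E ≃ᵢ E) 0) = (0 : E) from rfl, dist_zero_right] at this
  have hweval : w = v₁ (f (v₂ 0)) := by
    have h0 : TT w 0 = ((v₁ * f) * v₂) 0 := by rw [hvf', habv']
    simpa using h0
  -- w is close to (linp v₁) (f 0)
  have hclose : ‖w - linp v₁ (f 0)‖ < 2 * ε'' := by
    rw [linp_apply']
    have e1 : ‖v₁ (f (v₂ 0)) - v₁ (f 0)‖ = ‖v₂ 0‖ := by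
      rw [← dist_eq_norm, v₁.isometry.dist_eq, f.isometry.dist_eq, dist_eq_norm, sub_zero]
    calc ‖w - (v₁ (f 0) - v₁ 0)‖ = ‖(v₁ (f (v₂ 0)) - v₁ (f 0)) + v₁ 0‖ := by
          rw [hweval]; congr 1; abel
      _ ≤ ‖v₁ (f (v₂ 0)) - v₁ (f 0)‖ + ‖v₁ 0‖ := norm_add_le _ _
      _ = ‖v₂ 0‖ + ‖v₁ 0‖ := by rw [e1]
      _ < ε'' + ε'' := add_lt_add ha₂ ha₁
      _ = 2 * ε'' := by ring
  set h : ↥SG := pihom v₁ with hh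
  have hcoe : (h : E ≃ᵢ E) = linp v₁ := rfl
  -- norm of f 0 is controlled
  have hf0norm : ‖f 0‖ ≤ δ / 2 + 2 * ε'' := by
    have h1 : ‖linp v₁ (f 0)‖ = ‖f 0‖ := stab_norm (linp_zero v₁) _
    have h2 : ‖linp v₁ (f 0)‖ ≤ ‖w‖ + 2 * ε'' := by
      have h3 := norm_sub_norm_le (linp v₁ (f 0)) w
      have h4 : ‖linp v₁ (f 0) - w‖ ≤ 2 * ε'' := by
        rw [norm_sub_rev]; exact hclose.le
      linarith
    linarith
  have hfc : ‖f 0 - nrm (f 0)‖ ≤ 2 * ε'' := hnrm_close _ hf0norm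
  -- total estimate at scale w
  have htot : ‖w - linp v₁ (nrm (f 0))‖ < 4 * ε'' := by
    calc ‖w - linp v₁ (nrm (f 0))‖
        ≤ ‖w - linp v₁ (f 0)‖ + ‖linp v₁ (f 0) - linp v₁ (nrm (f 0))‖ :=
          norm_sub_le_norm_sub_add_norm_sub _ _ _
      _ = ‖w - linp v₁ (f 0)‖ + ‖f 0 - nrm (f 0)‖ := by
          rw [← stab_sub (linp_zero v₁), stab_norm (linp_zero v₁)]
      _ < 2 * ε'' + 2 * ε'' := by
          apply add_lt_add_of_lt_of_le hclose hfc
      _ = 4 * ε'' := by ring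
  -- scale back up
  refine ⟨Φ f, (Set.Finite.mem_toFinset _).2 (Set.mem_image_of_mem _ hf), h, ?_⟩
  have hΦval : ((Φ f : BX) : E) = (2 / δ) • nrm (f 0) := rfl
  have hsmul : (h : E ≃ᵢ E) ((2 / δ) • nrm (f 0)) = (2 / δ) • linp v₁ (nrm (f 0)) := by
    rw [hcoe]
    exact stab_smul (linp_zero v₁) _ _
  have hvw : (v : E) = (2 / δ) • w := by
    rw [hw, smul_smul]
    have : 2 / δ * (δ / 2) = 1 := by field_simp
    rw [this, one_smul]
  calc ‖(v : E) - (h : E ≃ᵢ E) ((Φ f : BX) : E)‖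
      = ‖(2 / δ) • w - (2 / δ) • linp v₁ (nrm (f 0))‖ := by rw [hvw, hΦval, hsmul]
    _ = (2 / δ) * ‖w - linp v₁ (nrm (f 0))‖ := by
        rw [← smul_sub, norm_smul, Real.norm_eq_abs, abs_of_nonneg (by positivity)]
    _ < (2 / δ) * (4 * ε'') := by
        apply mul_lt_mul_of_pos_left htot (by positivity)
    _ = ε / 2 := by rw [hε''def]; field_simp; ring
    _ < ε := by linarith

end ForwardQuot

section ForwardRP

variable {E : Type*} [NormedAddCommGroup E] [NormedSpace ℝ E]

local notation "SG" => MulAction.stabilizer (E ≃ᵢ E) (0 : E)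

theorem secondCountableIso [TopologicalSpace.SeparableSpace E] :
    SecondCountableTopology (E ≃ᵢ E) := by
  haveI : Nonempty E := ⟨0⟩
  haveI : SecondCountableTopology E := UniformSpace.secondCountable_of_separable E
  obtain ⟨useq, hdense⟩ := TopologicalSpace.exists_dense_seq E
  set φ : (E ≃ᵢ E) → (ℕ → E) := fun g n => g (useq n) with hφ
  have hind : Topology.IsInducing φ := by
    rw [Topology.isInducing_iff_nhds]
    intro g₀
    apply le_antisymm
    · have hφc : Continuous φ := continuous_pi fun n => continuous_evalIso (useq n)
      exact (hφc.tendsto g₀).le_comap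
    · intro V hV
      obtain ⟨s, ε, hε, hsub⟩ := exists_bNB_subset hV
      have hix : ∀ x : E, ∃ i, dist x (useq i) < ε / 3 := fun x =>
        hdense.exists_dist_lt x (by positivity)
      choose ix hixd using hix
      refine Filter.mem_comap.2
        ⟨⋂ x ∈ s, {c : ℕ → E | dist (c (ix x)) (g₀ (useq (ix x))) < ε / 3}, ?_, ?_⟩
      · refine (Filter.biInter_finset_mem s).2 fun x _ => ?_
        exact (continuous_apply (A := fun _ : ℕ => E) (ix x)).continuousAt.preimage_mem_nhds
          (Metric.ball_mem_nhds _ (by positivity))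
      · intro g hg
        apply hsub
        intro x hx
        have hgx : dist (g (useq (ix x))) (g₀ (useq (ix x))) < ε / 3 := by
          have := Set.mem_iInter₂.1 hg x hx
          exact this
        calc dist (g x) (g₀ x)
            ≤ dist (g x) (g (useq (ix x))) + dist (g (useq (ix x))) (g₀ (useq (ix x)))
              + dist (g₀ (useq (ix x))) (g₀ x) := dist_triangle4 _ _ _ _
          _ = dist x (useq (ix x)) + dist (g (useq (ix x))) (g₀ (useq (ix x)))
              + dist (useq (ix x)) x := by
              rw [g.isometry.dist_eq, g₀.isometry.dist_eq]
          _ < ε / 3 + ε / 3 + ε / 3 := by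
              have h1 := hixd x
              have h2 : dist (useq (ix x)) x < ε / 3 := by rwa [dist_comm]
              exact add_lt_add (add_lt_add h1 hgx) h2
          _ = ε := by ring
  exact hind.secondCountableTopology

theorem exists_dense_T [TopologicalSpace.SeparableSpace E] :
    ∃ T : ℕ → ↥SG, ∀ (z : ↥SG) (s : Finset E) (ε : ℝ), 0 < ε →
      ∃ n, (T n)⁻¹ * z ∈ KS s ε := by
  haveI h1 : SecondCountableTopology (E ≃ᵢ E) := secondCountableIso
  haveI h2 : SecondCountableTopology ↥SG :=
    (Topology.IsInducing.subtypeVal).secondCountableTopology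
  haveI h3 : TopologicalSpace.SeparableSpace ↥SG :=
    TopologicalSpace.SecondCountableTopology.to_separableSpace
  haveI : Nonempty ↥SG := ⟨1⟩
  obtain ⟨T, hT⟩ := TopologicalSpace.exists_dense_seq ↥SG
  refine ⟨T, fun z s ε hε => ?_⟩
  have hD : (Subtype.val ⁻¹' bNB (z : E ≃ᵢ E) s ε : Set ↥SG) ∈ 𝓝 z :=
    continuous_subtype_val.continuousAt.preimage_mem_nhds (bNB_mem_nhds _ s hε)
  have hz : z ∈ closure (Set.range T) := by
    rw [hT.closure_range]; trivial
  rw [mem_closure_iff_nhds] at hz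
  obtain ⟨y, hyD, hyR⟩ := hz _ hD
  obtain ⟨n, rfl⟩ := hyR
  refine ⟨n, fun x hx => ?_⟩
  have hx'' : dist (((T n : ↥SG) : E ≃ᵢ E) x) ((z : E ≃ᵢ E) x) < ε := hyD x hx
  have h5 := ((T n : ↥SG) : E ≃ᵢ E).isometry.dist_eq
    ((((T n : ↥SG) : E ≃ᵢ E))⁻¹ ((z : E ≃ᵢ E) x)) x
  rw [IsometryEquiv.apply_inv_self] at h5
  show dist ((((T n : ↥SG) : E ≃ᵢ E))⁻¹ ((z : E ≃ᵢ E) x)) x < ε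
  rw [← h5, dist_comm]
  exact hx''

/-- A set `A ⊆ G₀` is Roelcke precompact. -/
def RPs (A : Set ↥SG) : Prop :=
  ∀ N ∈ 𝓝 (1 : ↥SG), ∃ Fs : Set ↥SG, Fs.Finite ∧ A ⊆ N * Fs * N

theorem RPs_subset {A B : Set ↥SG} (h : A ⊆ B) (hB : RPs B) : RPs A := by
  intro N hN
  obtain ⟨Fs, hfin, hcov⟩ := hB N hN
  exact ⟨Fs, hfin, h.trans hcov⟩

theorem RPs_union {A B : Set ↥SG} (hA : RPs A) (hB : RPs B) : RPs (A ∪ B) := by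
  intro N hN
  obtain ⟨F₁, hf₁, hc₁⟩ := hA N hN
  obtain ⟨F₂, hf₂, hc₂⟩ := hB N hN
  refine ⟨F₁ ∪ F₂, hf₁.union hf₂, Set.union_subset ?_ ?_⟩
  · exact hc₁.trans (Set.mul_subset_mul_right (Set.mul_subset_mul_left Set.subset_union_left))
  · exact hc₂.trans (Set.mul_subset_mul_right (Set.mul_subset_mul_left Set.subset_union_right))

theorem RPs_singleton (a : ↥SG) : RPs {a} := by
  intro N hN
  refine ⟨{a}, Set.finite_singleton a, ?_⟩
  intro x hx
  rw [Set.mem_singleton_iff] at hx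
  subst hx
  have h1 : (1 : ↥SG) ∈ N := mem_of_mem_nhds hN
  exact ⟨1 * x, Set.mul_mem_mul h1 rfl, 1, h1, by group⟩

theorem conj_KS (f : ↥SG) (s : Finset E) (ε : ℝ) :
    ∃ s' : Finset E, ∀ x ∈ KS s' ε, f * x * f⁻¹ ∈ KS s ε := by
  classical
  refine ⟨s.image (fun y => ((f : E ≃ᵢ E))⁻¹ y), fun x hx y hy => ?_⟩
  show dist (((f * x * f⁻¹ : ↥SG) : E ≃ᵢ E) y) y < ε
  have hfy : ((f : E ≃ᵢ E))⁻¹ y ∈ s.image (fun y => ((f : E ≃ᵢ E))⁻¹ y) :=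
    Finset.mem_image_of_mem _ hy
  have hx' : dist ((x : E ≃ᵢ E) (((f : E ≃ᵢ E))⁻¹ y)) (((f : E ≃ᵢ E))⁻¹ y) < ε := hx _ hfy
  have h5 := (f : E ≃ᵢ E).isometry.dist_eq
    ((x : E ≃ᵢ E) (((f : E ≃ᵢ E))⁻¹ y)) (((f : E ≃ᵢ E))⁻¹ y)
  rw [IsometryEquiv.apply_inv_self] at h5
  show dist ((f : E ≃ᵢ E) ((x : E ≃ᵢ E) (((f : E ≃ᵢ E))⁻¹ y))) y < ε
  rw [h5]
  exact hx'

theorem RPs_mul (hK : ∃ (s₀ : Finset E) (ε₀ : ℝ), 0 < ε₀ ∧ RPs (KS s₀ ε₀))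
    {A B : Set ↥SG} (hA : RPs A) (hB : RPs B) : RPs (A * B) := by
  classical
  obtain ⟨s₀, ε₀, hε₀, hK₀⟩ := hK
  intro N hN
  obtain ⟨s, ε, hε, hKN⟩ := exists_KS_subset hN
  set ρ : ℝ := min ε ε₀ with hρ
  have hρpos : 0 < ρ := lt_min hε hε₀
  set V : Set ↥SG := KS (s ∪ s₀) (ρ/2) with hVdef
  have hVnhd : V ∈ 𝓝 (1 : ↥SG) := KS_mem_nhds _ (by positivity)
  have hVV : ∀ x ∈ V * V, x ∈ KS (s ∪ s₀) ρ := by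
    rintro x ⟨p, hp, q, hq, rfl⟩
    have := mul_mem_KS hp hq
    rwa [show ρ/2 + ρ/2 = ρ by ring] at this
  have hVV_N : V * V ⊆ N := by
    intro x hx
    exact hKN (KS_subset_KS Finset.subset_union_left (min_le_left _ _) (hVV x hx))
  have hVV_K₀ : V * V ⊆ KS s₀ ε₀ := by
    intro x hx
    exact KS_subset_KS Finset.subset_union_right (min_le_right _ _) (hVV x hx)
  obtain ⟨FA, hFAfin, hFAcov⟩ := hA V hVnhd
  obtain ⟨FB, hFBfin, hFBcov⟩ := hB V hVnhd
  have hchoice : ∀ p : ↥SG × ↥SG, ∃ Fp : Set ↥SG, Fp.Finite ∧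
      ∀ m ∈ KS s₀ ε₀, ∃ w₁ f₂ w₂, f₂ ∈ Fp ∧ w₁ * f₂ * w₂ = m ∧
        p.1 * w₁ * p.1⁻¹ ∈ V ∧ p.2⁻¹ * w₂ * p.2 ∈ V := by
    intro p
    obtain ⟨s₁, hs₁⟩ := conj_KS p.1 (s ∪ s₀) (ρ/2)
    obtain ⟨s₂', hs₂⟩ := conj_KS p.2⁻¹ (s ∪ s₀) (ρ/2)
    obtain ⟨Fp, hFpfin, hFpcov⟩ := hK₀ (KS (s₁ ∪ s₂') (ρ/2)) (KS_mem_nhds _ (by positivity))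
    refine ⟨Fp, hFpfin, fun m hm => ?_⟩
    obtain ⟨wf, hwf0, w₂, hw₂, hml⟩ := hFpcov hm
    obtain ⟨w₁, hw₁, f₂, hf₂, hwe⟩ := hwf0
    have hml' : wf * w₂ = m := hml
    have hwe' : w₁ * f₂ = wf := hwe
    refine ⟨w₁, f₂, w₂, hf₂, by rw [hwe', hml'], ?_, ?_⟩
    · exact hs₁ w₁ (KS_subset_KS Finset.subset_union_left le_rfl hw₁)
    · have := hs₂ w₂ (KS_subset_KS Finset.subset_union_right le_rfl hw₂)
      rwa [inv_inv] at this
  choose Fp hFpfin hFpdec using hchoice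
  set Fbig : Set ↥SG := ⋃ p ∈ FA ×ˢ FB, (fun f₂ => p.1 * f₂ * p.2) '' (Fp p) with hFbig
  have hFbigfin : Fbig.Finite :=
    (hFAfin.prod hFBfin).biUnion (fun p _ => ((hFpfin p).image _))
  refine ⟨Fbig, hFbigfin, ?_⟩
  rintro x ⟨a, ha, b, hb, rfl⟩
  show a * b ∈ N * Fbig * N
  obtain ⟨pf, hpf, p₂, hp₂, hae⟩ := hFAcov ha
  obtain ⟨p₁, hp₁, f, hf, hpe⟩ := hpf
  obtain ⟨pf', hpf', p₄, hp₄, hbe⟩ := hFBcov hb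
  obtain ⟨p₃, hp₃, f', hf', hpe'⟩ := hpf'
  have hae' : p₁ * f * p₂ = a := by rw [show p₁ * f = pf from hpe]; exact hae
  have hbe' : p₃ * f' * p₄ = b := by rw [show p₃ * f' = pf' from hpe']; exact hbe
  have hm : p₂ * p₃ ∈ KS s₀ ε₀ := hVV_K₀ (Set.mul_mem_mul hp₂ hp₃)
  obtain ⟨w₁, f₂, w₂, hf₂, hmeq, hconj1, hconj2⟩ := hFpdec (f, f') (p₂ * p₃) hm
  have hx : a * b = (p₁ * (f * w₁ * f⁻¹)) * (f * f₂ * f') * ((f'⁻¹ * w₂ * f') * p₄) := by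
    rw [← hae', ← hbe']
    calc (p₁ * f * p₂) * (p₃ * f' * p₄) = p₁ * f * (p₂ * p₃) * f' * p₄ := by group
      _ = p₁ * f * (w₁ * f₂ * w₂) * f' * p₄ := by rw [hmeq]
      _ = (p₁ * (f * w₁ * f⁻¹)) * (f * f₂ * f') * ((f'⁻¹ * w₂ * f') * p₄) := by group
  rw [hx]
  have hmid : f * f₂ * f' ∈ Fbig := by
    apply Set.mem_biUnion (Set.mk_mem_prod hf hf')
    exact Set.mem_image_of_mem _ hf₂
  exact Set.mul_mem_mul (Set.mul_mem_mul
    (hVV_N (Set.mul_mem_mul hp₁ hconj1)) hmid)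
    (hVV_N (Set.mul_mem_mul hconj2 hp₄))

theorem RPs_one : RPs (1 : Set ↥SG) := by
  have h : (1 : Set ↥SG) = {1} := rfl
  rw [h]
  exact RPs_singleton 1

theorem RPs_pow (hK : ∃ (s₀ : Finset E) (ε₀ : ℝ), 0 < ε₀ ∧ RPs (KS s₀ ε₀))
    {S : Set ↥SG} (hS : RPs S) : ∀ n : ℕ, RPs (S ^ n) := by
  intro n
  induction n with
  | zero => rw [pow_zero]; exact RPs_one
  | succ n ih => rw [pow_succ]; exact RPs_mul hK ih hS

theorem RPs_finset_mul (hK : ∃ (s₀ : Finset E) (ε₀ : ℝ), 0 < ε₀ ∧ RPs (KS s₀ ε₀))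
    {W : Set ↥SG} (hW : RPs W) (F : Finset ↥SG) : RPs ((F : Set ↥SG) * W) := by
  classical
  induction F using Finset.induction_on with
  | empty =>
    rw [Finset.coe_empty, Set.empty_mul]
    intro N hN
    exact ⟨∅, Set.finite_empty, by simp⟩
  | @insert a F' hnm ih =>
    rw [Finset.coe_insert, Set.insert_eq, Set.union_mul]
    exact RPs_union (RPs_mul hK (RPs_singleton a) hW) ih

/-- Roelcke precompactness of small basic neighbourhoods of the stabiliser, via the
projection trick. -/
theorem K0_RP {U : Set (E ≃ᵢ E)} (hURP : RoelckePrecompactSet (E ≃ᵢ E) U)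
    {s₀ : Finset E} {ε₀ : ℝ} (hsub : bN s₀ ε₀ ⊆ U) :
    RPs (KS s₀ ε₀ : Set ↥SG) := by
  classical
  intro N hN
  obtain ⟨s, ε, hε, hKN⟩ := exists_KS_subset hN
  obtain ⟨FU, hFUfin, hFUcov⟩ := hURP (bN (insert 0 s) (ε/2)) (bN_mem_nhds _ (by positivity))
  refine ⟨pihom '' FU, hFUfin.image _, ?_⟩
  intro k hk
  have hkU : (k : E ≃ᵢ E) ∈ U := hsub hk
  obtain ⟨ab, hab, v₂, hv₂, habv⟩ := hFUcov hkU
  obtain ⟨v₁, hv₁, f, hf, hvf⟩ := hab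
  have habv' : ab * v₂ = (k : E ≃ᵢ E) := habv
  have hvf' : v₁ * f = ab := hvf
  have hkeq : k = pihom v₁ * pihom f * pihom v₂ := by
    have h1 : v₁ * f * v₂ = (k : E ≃ᵢ E) := by rw [hvf']; exact habv'
    rw [← pihom_coe k, ← h1, pihom_mul, pihom_mul]
  have hmemN : ∀ v : E ≃ᵢ E, v ∈ bN (insert 0 s) (ε/2) → pihom v ∈ N := by
    intro v hv
    apply hKN
    intro x hx
    show dist (linp v x) x < ε
    have h0 : ‖v 0‖ < ε / 2 := by
      have := hv 0 (Finset.mem_insert_self 0 s)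
      rwa [show ((1 : E ≃ᵢ E) 0) = (0:E) from rfl, dist_zero_right] at this
    have hx' : dist (v x) x < ε / 2 := hv x (Finset.mem_insert_of_mem hx)
    have hd : dist (linp v x) (v x) = ‖v 0‖ := by
      rw [linp_apply', dist_eq_norm]
      have he : v x - v 0 - v x = -(v 0) := by abel
      rw [he, norm_neg]
    calc dist (linp v x) x ≤ dist (linp v x) (v x) + dist (v x) x := dist_triangle _ _ _
      _ < ε / 2 + ε / 2 := by rw [hd]; exact add_lt_add h0 hx'
      _ = ε := by ring
  rw [hkeq]
  exact Set.mul_mem_mul (Set.mul_mem_mul (hmemN v₁ hv₁) (Set.mem_image_of_mem _ hf))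
    (hmemN v₂ hv₂)

end ForwardRP

section ChainMetric

variable {G : Type*} [Group G] [TopologicalSpace G]

theorem eta_nonneg {η : G → G → ℝ} (hη : IsContLeftInvPseudoMetric G η) (g h : G) :
    0 ≤ η g h := by
  have h1 := hη.triangle g h g
  rw [hη.refl, hη.symm h g] at h1
  linarith

/-- A coarsely bounded set is covered by finitely many translates of powers of any
symmetric neighbourhood of the identity (word-metric bound). -/
theorem exists_word_bound
    (hmul : ∀ a : G, Continuous fun g : G => a * g)
    {W : Set G} (hW1 : (1:G) ∈ W) (hWsym : ∀ g ∈ W, g⁻¹ ∈ W) (hWnhd : W ∈ nhds (1:G))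
    {η : G → G → ℝ} (hη : IsContLeftInvPseudoMetric G η) (hηW : ∀ g : G, η 1 g < 1 → g ∈ W)
    (T : ℕ → G) (hT : ∀ z : G, ∃ n, (T n)⁻¹ * z ∈ W)
    {B : Set G} (h1B : (1:G) ∈ B) (hCB : CoarselyBoundedSet G B) :
    ∃ (F : Finset G) (m : ℕ), B ⊆ ((F : Set G) * W) ^ m := by
  by_contra hcon
  push_neg at hcon
  classical
  -- growth function
  set gg : ℕ → ℕ := fun n => Nat.rec 1 (fun _ g => 2 * g + 2) n with hgg
  have hggsucc : ∀ n, gg (n+1) = 2 * gg n + 2 := fun n => rfl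
  have hgg1 : ∀ n, 1 ≤ gg n := by
    intro n
    induction n with
    | zero => exact le_rfl
    | succ n ih => rw [hggsucc]; omega
  have hggmono : Monotone gg := monotone_nat_of_le_succ (fun n => by rw [hggsucc]; omega)
  -- finite sets
  set FF : ℕ → Finset G := fun n =>
    {1} ∪ (Finset.range n).image T ∪ (Finset.range n).image (fun i => (T i)⁻¹) with hFF
  have h1FF : ∀ n, (1:G) ∈ FF n := by
    intro n; simp [hFF]
  have hFFmono : ∀ {n m : ℕ}, n ≤ m → FF n ⊆ FF m := by
    intro n m hnm x hx
    simp only [hFF, Finset.mem_union, Finset.mem_image, Finset.mem_range,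
      Finset.mem_singleton] at hx ⊢
    rcases hx with (h | ⟨i, hi, rfl⟩) | ⟨i, hi, rfl⟩
    · exact Or.inl (Or.inl h)
    · exact Or.inl (Or.inr ⟨i, by omega, rfl⟩)
    · exact Or.inr ⟨i, by omega, rfl⟩
  have hFFsym : ∀ n x, x ∈ FF n → x⁻¹ ∈ FF n := by
    intro n x hx
    simp only [hFF, Finset.mem_union, Finset.mem_image, Finset.mem_range,
      Finset.mem_singleton] at hx ⊢
    rcases hx with (rfl | ⟨i, hi, rfl⟩) | ⟨i, hi, rfl⟩
    · exact Or.inl (Or.inl (by simp))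
    · exact Or.inr ⟨i, hi, rfl⟩
    · exact Or.inl (Or.inr ⟨i, hi, by simp⟩)
  -- shells
  set sh : ℕ → Set G := fun n => ((FF n : Set G) * W) ^ (gg n) with hsh
  have h1sW : ∀ n, (1:G) ∈ (FF n : Set G) * W := by
    intro n
    exact ⟨1, by simpa using h1FF n, 1, hW1, one_mul 1⟩
  have hsh1 : ∀ n, (1:G) ∈ sh n := by
    intro n
    show (1:G) ∈ ((FF n : Set G) * W) ^ (gg n)
    have h : (1:G) ^ (gg n) ∈ ((FF n : Set G) * W) ^ (gg n) := Set.pow_mem_pow (h1sW n)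
    rwa [one_pow] at h
  have hWsh : ∀ n, W ⊆ sh n := by
    intro n z hz
    show z ∈ ((FF n : Set G) * W) ^ (gg n)
    have h1 : z ∈ (FF n : Set G) * W := ⟨1, by simpa using h1FF n, z, hz, one_mul z⟩
    have h2 : z ∈ ((FF n : Set G) * W) ^ 1 := by rw [pow_one]; exact h1
    exact Set.pow_subset_pow_right (h1sW n) (hgg1 n) h2
  have hshmono : ∀ {n m : ℕ}, n ≤ m → sh n ⊆ sh m := by
    intro n m hnm
    calc sh n ⊆ ((FF m : Set G) * W) ^ (gg n) :=
        Set.pow_subset_pow_left (Set.mul_subset_mul_right (by exact_mod_cast hFFmono hnm))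
      _ ⊆ ((FF m : Set G) * W) ^ (gg m) := Set.pow_subset_pow_right (h1sW m) (hggmono hnm)
  set SS : ℕ → Set G := fun n => sh n ∪ (sh n)⁻¹ with hSS
  have hSSmono : ∀ {n m : ℕ}, n ≤ m → SS n ⊆ SS m := by
    intro n m hnm
    exact Set.union_subset_union (hshmono hnm) (Set.inv_subset_inv.2 (hshmono hnm))
  have hSSsym : ∀ n z, z ∈ SS n → z⁻¹ ∈ SS n := by
    intro n z hz
    rcases hz with hz | hz
    · exact Or.inr (Set.mem_inv.2 (by rwa [inv_inv]))
    · exact Or.inl (Set.mem_inv.1 hz)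
  have hSS0W : SS 0 ⊆ W := by
    have hsh0 : sh 0 = W := by
      show ((FF 0 : Set G) * W) ^ 1 = W
      have hFF0 : (FF 0 : Set G) = {1} := by
        simp [hFF]
      rw [pow_one, hFF0, show ({1} : Set G) = (1 : Set G) from rfl, one_mul]
    intro z hz
    rcases hz with hz | hz
    · rwa [hsh0] at hz
    · rw [hsh0] at hz
      rw [Set.mem_inv] at hz
      have := hWsym _ hz
      rwa [inv_inv] at this
  have hSSsh : ∀ n, SS n ⊆ sh (n+1) := by
    intro n z hz
    rcases hz with hz | hz
    · exact hshmono (Nat.le_succ n) hz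
    · -- inverse part
      rw [Set.mem_inv] at hz
      -- z⁻¹ ∈ (FF n * W)^(gg n), so z ∈ ((FF n * W)⁻¹)^(gg n) = (W⁻¹ * FF n⁻¹)^(gg n)
      have h1 : z ∈ (((FF n : Set G) * W)⁻¹) ^ (gg n) := by
        rw [inv_pow]
        exact Set.mem_inv.2 hz
      have h2 : (((FF n : Set G) * W)⁻¹ : Set G) ⊆ ((FF (n+1) : Set G) * W) ^ 2 := by
        rw [mul_inv_rev]
        rintro y ⟨wi, hwi, fi, hfi, rfl⟩
        rw [Set.mem_inv] at hwi hfi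
        have hw' : wi ∈ W := by
          have := hWsym _ hwi; rwa [inv_inv] at this
        have hf' : fi ∈ (FF (n+1) : Set G) := by
          have := hFFsym n _ hfi
          rw [inv_inv] at this
          exact_mod_cast hFFmono (Nat.le_succ n) this
        rw [sq]
        refine Set.mul_mem_mul ⟨1, by simpa using h1FF (n+1), wi, hw', one_mul wi⟩
          ⟨fi, hf', 1, hW1, mul_one fi⟩
      have h3 : z ∈ (((FF (n+1) : Set G) * W) ^ 2) ^ (gg n) :=
        Set.pow_subset_pow_left h2 h1
      rw [← pow_mul] at h3
      show z ∈ ((FF (n+1) : Set G) * W) ^ (gg (n+1))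
      exact Set.pow_subset_pow_right (h1sW (n+1)) (by rw [hggsucc]; omega) h3
  -- totality and κ
  have hSStot : ∀ z : G, ∃ n, z ∈ SS n := by
    intro z
    obtain ⟨i, hi⟩ := hT z
    refine ⟨i+1, Or.inl ?_⟩
    have hTi : T i ∈ (FF (i+1) : Set G) := by
      simp only [hFF, Finset.coe_union, Set.mem_union, Finset.coe_image, Finset.coe_singleton]
      exact Or.inl (Or.inr ⟨i, by simp, rfl⟩)
    have h1 : z ∈ (FF (i+1) : Set G) * W := ⟨T i, hTi, (T i)⁻¹ * z, hi, by group⟩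
    have h2 : z ∈ ((FF (i+1) : Set G) * W) ^ 1 := by rw [pow_one]; exact h1
    show z ∈ ((FF (i+1) : Set G) * W) ^ (gg (i+1))
    exact Set.pow_subset_pow_right (h1sW (i+1)) (hgg1 (i+1)) h2
  set κ : G → ℕ := fun z => Nat.find (hSStot z) with hκ
  have hκmem : ∀ z, z ∈ SS (κ z) := fun z => Nat.find_spec (hSStot z)
  have hκmin : ∀ z n, z ∈ SS n → κ z ≤ n := fun z n h => Nat.find_min' _ h
  have hκinv : ∀ z : G, κ z⁻¹ = κ z := by
    have key : ∀ z : G, κ z⁻¹ ≤ κ z := fun z => hκmin _ _ (hSSsym _ _ (hκmem z))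
    intro z
    refine le_antisymm (key z) ?_
    have := key z⁻¹
    rwa [inv_inv] at this
  have hκW : ∀ z, z ∉ W → 1 ≤ κ z := by
    intro z hz
    by_contra hcon2
    push_neg at hcon2
    have h0 : κ z = 0 := by omega
    have := hκmem z
    rw [h0] at this
    exact hz (hSS0W this)
  -- the cost function
  set c : G → G → ℝ := fun u v => if u⁻¹ * v ∈ W then η u v else (κ (u⁻¹ * v) : ℝ) with hc
  have hc_nonneg : ∀ u v, 0 ≤ c u v := by
    intro u v
    rw [hc]
    dsimp only
    split_ifs
    · exact eta_nonneg hη u v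
    · positivity
  have hc_symm : ∀ u v, c u v = c v u := by
    intro u v
    have hinv : (u⁻¹ * v)⁻¹ = v⁻¹ * u := by group
    have hiff : u⁻¹ * v ∈ W ↔ v⁻¹ * u ∈ W := by
      constructor
      · intro h; have := hWsym _ h; rwa [hinv] at this
      · intro h; have := hWsym _ h
        rw [show (v⁻¹ * u)⁻¹ = u⁻¹ * v by group] at this
        exact this
    rw [hc]
    dsimp only
    by_cases h : u⁻¹ * v ∈ W
    · rw [if_pos h, if_pos (hiff.1 h), hη.symm]
    · rw [if_neg h, if_neg (fun h' => h (hiff.2 h'))]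
      rw [show v⁻¹ * u = (u⁻¹ * v)⁻¹ by group, hκinv]
  have hc_left : ∀ a u v, c (a*u) (a*v) = c u v := by
    intro a u v
    have h1 : (a*u)⁻¹ * (a*v) = u⁻¹ * v := by group
    rw [hc]
    dsimp only
    rw [h1, hη.left_invariant]
  -- chain sums
  set CS : G → G → Set ℝ := fun g h => {r | ∃ (k:ℕ) (x : ℕ → G), x 0 = g ∧ x k = h ∧
    r = ∑ i ∈ Finset.range k, c (x i) (x (i+1))} with hCSdef
  have hone_chain : ∀ g h : G, c g h ∈ CS g h := by
    intro g h
    refine ⟨1, fun i => if i = 0 then g else h, by simp, by simp, ?_⟩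
    rw [Finset.sum_range_one]
    norm_num
  have hCSne : ∀ g h, (CS g h).Nonempty := fun g h => ⟨c g h, hone_chain g h⟩
  have hCS0 : ∀ g h r, r ∈ CS g h → 0 ≤ r := by
    rintro g h r ⟨k, x, _, _, rfl⟩
    exact Finset.sum_nonneg (fun i _ => hc_nonneg _ _)
  set d : G → G → ℝ := fun g h => sInf (CS g h) with hd
  have hdbdd : ∀ g h, BddBelow (CS g h) := fun g h => ⟨0, fun r hr => hCS0 g h r hr⟩
  have hd_nonneg : ∀ g h, 0 ≤ d g h := fun g h => le_csInf (hCSne g h) (hCS0 g h)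
  have hd_le : ∀ g h r, r ∈ CS g h → d g h ≤ r := fun g h r hr => csInf_le (hdbdd g h) hr
  have hd_le_c : ∀ g h, d g h ≤ c g h := fun g h => hd_le _ _ _ (hone_chain g h)
  have hd_refl : ∀ g, d g g = 0 := by
    intro g
    refine le_antisymm (hd_le g g 0 ⟨0, fun _ => g, rfl, rfl, by simp⟩) (hd_nonneg g g)
  have hCS_symm : ∀ g h r, r ∈ CS g h → r ∈ CS h g := by
    rintro g h r ⟨k, x, hx0, hxk, rfl⟩
    refine ⟨k, fun i => x (k - i), by simp [hxk], by simp [hx0], ?_⟩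
    rw [← Finset.sum_range_reflect (fun j => c (x j) (x (j+1))) k]
    apply Finset.sum_congr rfl
    intro i hi
    rw [Finset.mem_range] at hi
    have h1 : k - i = (k - 1 - i) + 1 := by omega
    have h2 : k - (i+1) = k - 1 - i := by omega
    show c (x (k - 1 - i)) (x ((k - 1 - i) + 1)) = c (x (k - i)) (x (k - (i+1)))
    rw [h1, h2]
    exact hc_symm _ _
  have hd_symm : ∀ g h, d g h = d h g := by
    intro g h
    apply le_antisymm
    · exact le_csInf (hCSne h g) (fun r hr => hd_le g h r (hCS_symm h g r hr))
    · exact le_csInf (hCSne g h) (fun r hr => hd_le h g r (hCS_symm g h r hr))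
  have hconcat : ∀ g h l r₁ r₂, r₁ ∈ CS g h → r₂ ∈ CS h l → r₁ + r₂ ∈ CS g l := by
    rintro g h l r₁ r₂ ⟨k₁, x, hx0, hxk, rfl⟩ ⟨k₂, y, hy0, hyk, rfl⟩
    refine ⟨k₁ + k₂, fun i => if i < k₁ then x i else y (i - k₁), ?_, ?_, ?_⟩
    · by_cases h0 : 0 < k₁
      · simp [h0, hx0]
      · have hk₁ : k₁ = 0 := by omega
        subst hk₁
        show (if (0:ℕ) < 0 then x 0 else y (0 - 0)) = g
        rw [if_neg (lt_irrefl 0)]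
        show y 0 = g
        rw [hy0, ← hxk, hx0]
    · have hlt : ¬ (k₁ + k₂ < k₁) := by omega
      simp only [hlt, if_false]
      rw [Nat.add_sub_cancel_left, hyk]
    · rw [Finset.sum_range_add]
      congr 1
      · apply Finset.sum_congr rfl
        intro i hi
        rw [Finset.mem_range] at hi
        by_cases hi1 : i + 1 < k₁
        · simp [hi, hi1]
        · have hieq : i + 1 = k₁ := by omega
          simp only [hi, if_true, hi1, if_false]
          rw [show i + 1 - k₁ = 0 by omega, hy0, ← hxk, ← hieq]
      · apply Finset.sum_congr rfl
        intro i hi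
        have hlt1 : ¬ (k₁ + i < k₁) := by omega
        have hlt2 : ¬ (k₁ + i + 1 < k₁) := by omega
        simp only [hlt1, hlt2, if_false]
        rw [Nat.add_sub_cancel_left, show k₁ + i + 1 - k₁ = i + 1 by omega]
  have hd_tri : ∀ g h l, d g l ≤ d g h + d h l := by
    intro g h l
    refine le_of_forall_pos_le_add fun ε hε => ?_
    obtain ⟨r₁, hr₁mem, hr₁⟩ := Real.lt_sInf_add_pos (hCSne g h) (show 0 < ε/2 by linarith)
    obtain ⟨r₂, hr₂mem, hr₂⟩ := Real.lt_sInf_add_pos (hCSne h l) (show 0 < ε/2 by linarith)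
    have := hd_le g l _ (hconcat g h l r₁ r₂ hr₁mem hr₂mem)
    have e1 : sInf (CS g h) = d g h := rfl
    have e2 : sInf (CS h l) = d h l := rfl
    rw [e1] at hr₁
    rw [e2] at hr₂
    linarith
  have hd_left : ∀ (a x y : G), d (a * x) (a * y) = d x y := by
    have hkey : ∀ a g h r, r ∈ CS g h → r ∈ CS (a*g) (a*h) := by
      rintro a g h r ⟨k, x, hx0, hxk, rfl⟩
      refine ⟨k, fun i => a * x i, by show a * x 0 = a * g; rw [hx0],
        by show a * x k = a * h; rw [hxk], ?_⟩
      apply Finset.sum_congr rfl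
      intro i _
      exact (hc_left a (x i) (x (i+1))).symm
    intro a g h
    apply le_antisymm
    · exact le_csInf (hCSne g h) (fun r hr => hd_le _ _ r (hkey a g h r hr))
    · refine le_csInf (hCSne (a*g) (a*h)) (fun r hr => hd_le _ _ r ?_)
      have := hkey a⁻¹ (a*g) (a*h) r hr
      rwa [inv_mul_cancel_left, inv_mul_cancel_left] at this
  have hd_cont : Continuous fun p : G × G => d p.1 p.2 := by
    rw [continuous_iff_continuousAt]
    rintro ⟨g₀, h₀⟩
    have hWnbhd : ∀ g₁ : G, {g | g₁⁻¹ * g ∈ W ∧ η g₁ g < 1/2} ∈ 𝓝 g₁ := by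
      intro g₁
      apply Filter.inter_mem
      · have hcont := (hmul g₁⁻¹).continuousAt (x := g₁)
        have hmem : (fun g => g₁⁻¹ * g) ⁻¹' W ∈ 𝓝 g₁ :=
          hcont.preimage_mem_nhds (by simpa using hWnhd)
        exact hmem
      · have hc2 : Continuous fun g => η g₁ g :=
          hη.continuous.comp (continuous_const.prodMk continuous_id)
        have hop : IsOpen {g | η g₁ g < 1/2} := isOpen_lt hc2 continuous_const
        apply hop.mem_nhds
        show η g₁ g₁ < 1/2
        rw [hη.refl]; norm_num
    rw [ContinuousAt, Metric.tendsto_nhds]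
    intro ε hε
    have hWnbhd2 : ∀ g₁ : G, {g | g₁⁻¹ * g ∈ W ∧ η g₁ g < min (1/2) (ε/2)} ∈ 𝓝 g₁ := by
      intro g₁
      apply Filter.inter_mem
      · have hcont := (hmul g₁⁻¹).continuousAt (x := g₁)
        have hmem : (fun g => g₁⁻¹ * g) ⁻¹' W ∈ 𝓝 g₁ :=
          hcont.preimage_mem_nhds (by simpa using hWnhd)
        exact hmem
      · have hc2 : Continuous fun g => η g₁ g :=
          hη.continuous.comp (continuous_const.prodMk continuous_id)
        have hop : IsOpen {g | η g₁ g < min (1/2) (ε/2)} := isOpen_lt hc2 continuous_const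
        apply hop.mem_nhds
        show η g₁ g₁ < min (1/2) (ε/2)
        rw [hη.refl]
        exact lt_min (by norm_num) (by linarith)
    rw [nhds_prod_eq]
    filter_upwards [Filter.prod_mem_prod (hWnbhd2 g₀) (hWnbhd2 h₀)]
    rintro ⟨g, h⟩ ⟨⟨hgW, hgη⟩, ⟨hhW, hhη⟩⟩
    have h1 : d g₀ g ≤ η g₀ g := by
      refine le_trans (hd_le_c _ _) ?_
      rw [hc]
      dsimp only
      rw [if_pos hgW]
    have h2 : d h₀ h ≤ η h₀ h := by
      refine le_trans (hd_le_c _ _) ?_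
      rw [hc]
      dsimp only
      rw [if_pos hhW]
    have h3 : d g h ≤ d g₀ h₀ + (d g₀ g + d h₀ h) := by
      calc d g h ≤ d g g₀ + d g₀ h := hd_tri _ _ _
        _ ≤ d g g₀ + (d g₀ h₀ + d h₀ h) := by linarith [hd_tri g₀ h₀ h]
        _ = d g₀ h₀ + (d g₀ g + d h₀ h) := by rw [hd_symm g g₀]; ring
    have h4 : d g₀ h₀ ≤ d g h + (d g₀ g + d h₀ h) := by
      calc d g₀ h₀ ≤ d g₀ g + d g h₀ := hd_tri _ _ _
        _ ≤ d g₀ g + (d g h + d h h₀) := by linarith [hd_tri g h h₀]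
        _ = d g h + (d g₀ g + d h₀ h) := by rw [hd_symm h h₀]; ring
    have h5 : dist (d g h) (d g₀ h₀) ≤ d g₀ g + d h₀ h := by
      rw [Real.dist_eq, abs_sub_le_iff]
      constructor <;> linarith
    have h6 : d g₀ g + d h₀ h < ε := by
      have e1 : d g₀ g < ε/2 := lt_of_le_of_lt h1 (lt_of_lt_of_le hgη (min_le_right _ _))
      have e2 : d h₀ h < ε/2 := lt_of_le_of_lt h2 (lt_of_lt_of_le hhη (min_le_right _ _))
      linarith
    exact lt_of_le_of_lt h5 h6
  -- d is a continuous left-invariant pseudometric; get the bound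
  have hdinst : IsContLeftInvPseudoMetric G d :=
    ⟨hd_refl, hd_symm, hd_tri, hd_left, hd_cont⟩
  obtain ⟨C, hC⟩ := hCB d hdinst
  set N : ℕ := ⌈C⌉₊ + 1 with hN
  have hCN : C < N := by
    calc C ≤ (⌈C⌉₊ : ℝ) := Nat.le_ceil C
      _ < N := by exact_mod_cast Nat.lt_succ_self _
  set R : Set G := insert 1 (W ∪ SS N) with hR
  have h1R : (1:G) ∈ R := Set.mem_insert _ _
  -- the block lemma
  have hblock : ∀ (k : ℕ) (x : ℕ → G), (∑ i ∈ Finset.range k, c (x i) (x (i+1))) ≤ (N:ℝ) →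
      ∃ (n : ℕ) (A ww : G) (β : ℝ), (x 0)⁻¹ * x k = A * ww ∧ A ∈ R ^ n ∧ 0 ≤ β ∧ β < 1 ∧
        η 1 ww ≤ β ∧ (n : ℝ) / 2 + β ≤ ∑ i ∈ Finset.range k, c (x i) (x (i+1)) := by
    intro k
    induction k with
    | zero =>
      intro x _
      refine ⟨0, 1, 1, 0, by simp, ?_, le_rfl, one_pos, by rw [hη.refl], by simp⟩
      rw [pow_zero]
      exact Set.mem_one.2 rfl
    | succ k ih =>
      intro x hx
      have hsum : ∑ i ∈ Finset.range (k+1), c (x i) (x (i+1))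
          = (∑ i ∈ Finset.range k, c (x i) (x (i+1))) + c (x k) (x (k+1)) :=
        Finset.sum_range_succ _ _
      have hprefix : ∑ i ∈ Finset.range k, c (x i) (x (i+1)) ≤ (N:ℝ) := by
        rw [hsum] at hx
        have := hc_nonneg (x k) (x (k+1))
        linarith
      obtain ⟨n, A, ww, β, heq, hA, hβ0, hβ1, hηw, hbound⟩ := ih x hprefix
      set z := (x k)⁻¹ * x (k+1) with hz
      have hstep : (x 0)⁻¹ * x (k+1) = A * ww * z := by
        have e1 : (x 0)⁻¹ * x (k+1) = ((x 0)⁻¹ * x k) * ((x k)⁻¹ * x (k+1)) := by group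
        rw [e1, heq]
      have hηz : η (x k) (x (k+1)) = η 1 z := by
        have e2 : x k * z = x (k+1) := by rw [hz]; group
        calc η (x k) (x (k+1)) = η (x k * 1) (x k * z) := by rw [mul_one, e2]
          _ = η 1 z := hη.left_invariant _ _ _
      by_cases hzW : z ∈ W
      · have hcz : c (x k) (x (k+1)) = η 1 z := by
          rw [hc]
          dsimp only
          rw [if_pos hzW, hηz]
        by_cases hflush : β + η 1 z < 1
        · refine ⟨n, A, ww * z, β + η 1 z, by rw [hstep, mul_assoc], hA,
            by have := eta_nonneg hη 1 z; linarith, hflush, ?_, ?_⟩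
          · calc η 1 (ww * z) ≤ η 1 ww + η ww (ww * z) := hη.triangle _ _ _
              _ = η 1 ww + η 1 z := by
                  have := hη.left_invariant ww 1 z
                  rw [mul_one] at this
                  rw [this]
              _ ≤ β + η 1 z := by linarith
          · rw [hsum, hcz]
            linarith
        · push_neg at hflush
          have hwwW : ww ∈ W := hηW ww (lt_of_le_of_lt hηw hβ1)
          refine ⟨n + 2, A * ww * z, 1, 0, by rw [hstep, mul_one], ?_, le_rfl, one_pos,
            by rw [hη.refl], ?_⟩
          · have e1 : A * ww * z ∈ R ^ n * R * R :=
              Set.mul_mem_mul (Set.mul_mem_mul hA (Set.mem_insert_of_mem _ (Or.inl hwwW)))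
                (Set.mem_insert_of_mem _ (Or.inl hzW))
            rwa [show R ^ n * R * R = R ^ (n+2) by rw [pow_succ, pow_succ]] at e1
          · rw [hsum, hcz]
            push_cast
            linarith
      · have hcz : c (x k) (x (k+1)) = (κ z : ℝ) := by
          rw [hc]
          dsimp only
          rw [if_neg hzW]
        have hκz1 : 1 ≤ κ z := hκW z hzW
        have hκzN : κ z ≤ N := by
          have hterm : c (x k) (x (k+1)) ≤ ∑ i ∈ Finset.range (k+1), c (x i) (x (i+1)) := by
            rw [hsum]
            have := Finset.sum_nonneg (fun i (_ : i ∈ Finset.range k) => hc_nonneg (x i) (x (i+1)))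
            linarith
          rw [hcz] at hterm
          have : (κ z : ℝ) ≤ (N:ℝ) := le_trans hterm hx
          exact_mod_cast this
        have hzR : z ∈ R :=
          Set.mem_insert_of_mem _ (Or.inr (hSSmono hκzN (hκmem z)))
        have hwwW : ww ∈ W := hηW ww (lt_of_le_of_lt hηw hβ1)
        refine ⟨n + 2, A * ww * z, 1, 0, by rw [hstep, mul_one], ?_, le_rfl, one_pos,
          by rw [hη.refl], ?_⟩
        · have e1 : A * ww * z ∈ R ^ n * R * R :=
            Set.mul_mem_mul (Set.mul_mem_mul hA (Set.mem_insert_of_mem _ (Or.inl hwwW))) hzR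
          rwa [show R ^ n * R * R = R ^ (n+2) by rw [pow_succ, pow_succ]] at e1
        · rw [hsum, hcz]
          have hκcast : (1:ℝ) ≤ (κ z : ℝ) := by exact_mod_cast hκz1
          push_cast
          linarith
  -- the witness
  obtain ⟨bb, hbbB, hbbnot⟩ := Set.not_subset.1 (hcon (FF (N+1)) (gg (N+1) * (2*N+1)))
  have hdbb : d 1 bb ≤ C := hC 1 h1B bb hbbB
  have hsInflt : sInf (CS 1 bb) < (N:ℝ) := lt_of_le_of_lt hdbb hCN
  obtain ⟨r, hrmem, hrlt⟩ := exists_lt_of_csInf_lt (hCSne 1 bb) hsInflt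
  obtain ⟨k, x, hx0, hxk, hrsum⟩ := hrmem
  have hsumN : (∑ i ∈ Finset.range k, c (x i) (x (i+1))) ≤ (N:ℝ) := by
    rw [← hrsum]; exact hrlt.le
  obtain ⟨n, A, ww, β, heq, hA, hβ0, hβ1, hηw, hbound⟩ := hblock k x hsumN
  have hwwW : ww ∈ W := hηW ww (lt_of_le_of_lt hηw hβ1)
  have hnN : n ≤ 2*N := by
    have h1 : (n:ℝ)/2 ≤ N := by
      have := hCS0 1 bb r ⟨k, x, hx0, hxk, hrsum⟩
      rw [hrsum] at hrlt
      linarith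
    have : (n:ℝ) ≤ 2*N := by linarith
    exact_mod_cast this
  have hbbeq : bb = A * ww := by
    have := heq
    rw [hx0, hxk, inv_one, one_mul] at this
    exact this
  have hbbR : bb ∈ R ^ (2*N+1) := by
    rw [hbbeq]
    have hwwR : ww ∈ R := Set.mem_insert_of_mem _ (Or.inl hwwW)
    have e1 : A * ww ∈ R ^ n * R ^ 1 := Set.mul_mem_mul hA (by rwa [pow_one])
    rw [← pow_add] at e1
    exact Set.pow_subset_pow_right h1R (by omega) e1
  have hRsh : R ⊆ sh (N+1) := by
    intro z hz
    rcases hz with rfl | hz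
    · exact hsh1 _
    rcases hz with hzW | hzSS
    · exact hWsh (N+1) hzW
    · exact hSSsh N hzSS
  have hfinal : bb ∈ ((FF (N+1) : Set G) * W) ^ (gg (N+1) * (2*N+1)) := by
    have h2 : bb ∈ (sh (N+1)) ^ (2*N+1) := Set.pow_subset_pow_left hRsh hbbR
    have h3 : bb ∈ (((FF (N+1) : Set G) * W) ^ (gg (N+1))) ^ (2*N+1) := h2
    rwa [← pow_mul] at h3
  exact hbbnot hfinal

end ChainMetric

section FinalAssembly

variable {E : Type*} [NormedAddCommGroup E] [NormedSpace ℝ E]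

local notation "SG" => MulAction.stabilizer (E ≃ᵢ E) (0 : E)
local notation "BX" => Metric.closedBall (0 : E) 1

theorem continuous_mul_left_iso (f : E ≃ᵢ E) : Continuous fun h : E ≃ᵢ E => f * h := by
  apply continuous_induced_rng.2
  show Continuous fun h : E ≃ᵢ E => ⇑(f * h)
  apply continuous_pi
  intro x
  show Continuous fun h : E ≃ᵢ E => f (h x)
  exact f.continuous.comp (continuous_evalIso x)

theorem continuous_mul_left_SG (a : ↥SG) : Continuous fun g : ↥SG => a * g :=
  (((continuous_mul_left_iso (a : E ≃ᵢ E)).comp continuous_stab_coe).subtype_mk _)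

theorem one_mem_KS {s : Finset E} {ε : ℝ} (hε : 0 < ε) : (1 : ↥SG) ∈ KS s ε := by
  intro x _
  show dist (((1 : ↥SG) : E ≃ᵢ E) x) x < ε
  have : (((1 : ↥SG) : E ≃ᵢ E) x) = x := rfl
  rw [this, dist_self]
  exact hε

/-- The (⇒) direction for the stabiliser: Roelcke precompactness. -/
theorem rhs1_of_lhs [TopologicalSpace.SeparableSpace E]
    (hLRP : LocallyRoelckePrecompact (E ≃ᵢ E)) (hCP : CoarselyProperSMul (E ≃ᵢ E) E) :
    RoelckePrecompactSet (G := ↥SG) (Set.univ : Set ↥SG) := by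
  obtain ⟨U, hU, hURP⟩ := hLRP
  obtain ⟨s₀, ε₀, hε₀, hs₀U⟩ := exists_bN_subset hU
  have hK : RPs (KS s₀ ε₀ : Set ↥SG) := K0_RP hURP hs₀U
  have hK' : ∃ (s₁ : Finset E) (ε₁ : ℝ), 0 < ε₁ ∧ RPs (KS s₁ ε₁ : Set ↥SG) := ⟨s₀, ε₀, hε₀, hK⟩
  -- the pseudometric η
  set η : ↥SG → ↥SG → ℝ :=
    fun g h => (∑ x ∈ s₀, dist ((g : E ≃ᵢ E) x) ((h : E ≃ᵢ E) x)) / ε₀ with hηdef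
  have hη : IsContLeftInvPseudoMetric ↥SG η := by
    constructor
    · intro g; rw [hηdef]; simp
    · intro g h; rw [hηdef]; simp only
      congr 1
      apply Finset.sum_congr rfl
      intro x _
      exact dist_comm _ _
    · intro g h l
      rw [hηdef]
      simp only
      rw [← add_div]
      gcongr
      rw [← Finset.sum_add_distrib]
      apply Finset.sum_le_sum
      intro x _
      exact dist_triangle _ _ _
    · intro a g h
      rw [hηdef]
      simp only
      congr 1
      apply Finset.sum_congr rfl
      intro x _
      show dist (((a * g : ↥SG) : E ≃ᵢ E) x) (((a * h : ↥SG) : E ≃ᵢ E) x) = _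
      have e1 : ((a * g : ↥SG) : E ≃ᵢ E) x = (a : E ≃ᵢ E) ((g : E ≃ᵢ E) x) := rfl
      have e2 : ((a * h : ↥SG) : E ≃ᵢ E) x = (a : E ≃ᵢ E) ((h : E ≃ᵢ E) x) := rfl
      rw [e1, e2, (a : E ≃ᵢ E).isometry.dist_eq]
    · apply Continuous.div_const
      apply continuous_finset_sum
      intro x _
      apply Continuous.dist
      · exact (continuous_evalIso x).comp (continuous_stab_coe.comp continuous_fst)
      · exact (continuous_evalIso x).comp (continuous_stab_coe.comp continuous_snd)
  have hηW : ∀ g : ↥SG, η 1 g < 1 → g ∈ KS s₀ ε₀ := by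
    intro g hg x hx
    show dist ((g : E ≃ᵢ E) x) x < ε₀
    rw [hηdef] at hg
    simp only at hg
    rw [div_lt_one hε₀] at hg
    have hterm : dist (((1 : ↥SG) : E ≃ᵢ E) x) ((g : E ≃ᵢ E) x)
        ≤ ∑ y ∈ s₀, dist (((1 : ↥SG) : E ≃ᵢ E) y) ((g : E ≃ᵢ E) y) :=
      Finset.single_le_sum (fun y _ => dist_nonneg) hx
    have e1 : (((1 : ↥SG) : E ≃ᵢ E) x) = x := rfl
    rw [e1] at hterm
    rw [dist_comm]
    exact lt_of_le_of_lt hterm hg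
  obtain ⟨T, hT⟩ := exists_dense_T (E := E)
  have hCB : CoarselyBoundedSet ↥SG (Set.univ : Set ↥SG) := by
    intro d hd
    obtain ⟨C, hC⟩ := stab_bounded_pseudometric (hCP 0 1 one_pos) d hd
    exact ⟨C, fun a _ b _ => hC a b⟩
  obtain ⟨F, m, hFm⟩ := exists_word_bound continuous_mul_left_SG (one_mem_KS hε₀)
    (fun g hg => inv_mem_KS hg) (KS_mem_nhds s₀ hε₀) hη hηW T
    (fun z => hT z s₀ ε₀ hε₀) (Set.mem_univ 1) hCB
  have hpow : RPs (((F : Set ↥SG) * KS s₀ ε₀) ^ m) :=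
    RPs_pow hK' (RPs_finset_mul hK' hK F) m
  exact RPs_subset hFm hpow

end FinalAssembly

/-- For a separable real Banach space `E`, the isometry group `Iso(E)` is
locally Roelcke precompact with coarsely proper action on `E` if and only if the stabiliser
`G₀` of `0` is a Roelcke precompact group and the quotient `E₁ ⫽ G₀` of the closed unit ball
is compact. -/
theorem statement13 (E : Type*) [NormedAddCommGroup E] [NormedSpace ℝ E] [CompleteSpace E]
    [TopologicalSpace.SeparableSpace E] :
    (LocallyRoelckePrecompact (E ≃ᵢ E) ∧ CoarselyProperSMul (E ≃ᵢ E) E) ↔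
    (RoelckePrecompactSet (G := MulAction.stabilizer (E ≃ᵢ E) (0 : E))
        (Set.univ : Set (MulAction.stabilizer (E ≃ᵢ E) (0 : E))) ∧
      CompactSpace (OrbQuot (MulAction.stabilizer (E ≃ᵢ E) (0 : E))
        (Metric.closedBall (0 : E) 1))) := by
  constructor
  · rintro ⟨hLRP, hCP⟩
    exact ⟨rhs1_of_lhs hLRP hCP, rhs2_of_lhs hLRP⟩
  · rintro ⟨hRP, hcpt⟩
    exact ⟨lrp_of_rhs hRP hcpt, cp_of_rhs hRP⟩
end

section
/- Let E be a real Banach space and let G₀ be its group of surjective linear isometries. Then E ⫽ G₀ is a proper metric space if and only if E₁ ⫽ G₀ is compact, where E₁ = {x ∈ E : ‖x‖ ≤ 1} is the closed unit ball. -/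
set_option linter.unusedSectionVars false
set_option maxHeartbeats 1000000

open Metric MulAction Filter Set Topology Pointwise

section LinearIsoAction

variable (E : Type*) [NormedAddCommGroup E] [NormedSpace ℝ E]

/-- The tautological action of the group of surjective linear isometries on the space. -/
instance linearIsometryEquivMulAction : MulAction (E ≃ₗᵢ[ℝ] E) E where
  smul f x := f x
  one_smul _ := rfl
  mul_smul _ _ _ := rfl

instance linearIsometryEquivIsometricSMul : IsIsometricSMul (E ≃ₗᵢ[ℝ] E) E :=
  ⟨fun f => f.isometry⟩

/-- Surjective linear isometries preserve the closed unit ball. -/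
noncomputable instance linearIsometryEquivBallAction :
    MulAction (E ≃ₗᵢ[ℝ] E) (Metric.closedBall (0 : E) 1) where
  smul f y := ⟨f y, by
    have hy : dist (y : E) 0 ≤ 1 := Metric.mem_closedBall.mp y.2
    refine Metric.mem_closedBall.mpr ?_
    calc dist (f (y : E)) 0 = dist (f (y : E)) (f 0) := by rw [map_zero]
      _ = dist (y : E) 0 := f.isometry.dist_eq _ _
      _ ≤ 1 := hy⟩
  one_smul y := Subtype.ext rfl
  mul_smul f g y := Subtype.ext rfl

instance linearIsometryEquivBallIsometric :
    IsIsometricSMul (E ≃ₗᵢ[ℝ] E) (Metric.closedBall (0 : E) 1) :=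
  ⟨fun f => Isometry.of_dist_eq fun y z => by
    rw [Subtype.dist_eq, Subtype.dist_eq]
    exact f.isometry.dist_eq _ _⟩

end LinearIsoAction

section TopAux

variable (G : Type*) {X : Type*} [Group G] [PseudoMetricSpace X] [MulAction G X]
  [IsIsometricSMul G X]

lemma aux_mk_out (p : OrbQuot G X) : OrbQuot.mk G p.out = p := Quotient.out_eq p

lemma aux_dist_mk_left (x : X) (p : OrbQuot G X) :
    dist (OrbQuot.mk G x) p = orbDist G x p.out := by
  have h := OrbQuot.dist_mk G x p.out
  rwa [aux_mk_out] at h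

lemma aux_mk_smul (g : G) (x : X) : OrbQuot.mk G (g • x) = OrbQuot.mk G x :=
  Quotient.sound (show closure (MulAction.orbit G (g • x)) = closure (MulAction.orbit G x) by
    rw [MulAction.orbit_smul])

lemma aux_mk_lipschitz : LipschitzWith 1 (OrbQuot.mk G : X → OrbQuot G X) := by
  refine LipschitzWith.of_dist_le_mul fun x y => ?_
  rw [OrbQuot.dist_mk, NNReal.coe_one, one_mul]
  calc orbDist G x y ≤ dist x ((1 : G) • y) := orbDist_le G x y 1
    _ = dist x y := by rw [one_smul]

/-- The quotient topology on `X ⫽ G` coincides with the metric topology. -/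
theorem aux_topEq :
    (instTopologicalSpaceQuotient : TopologicalSpace (OrbQuot G X)) =
      UniformSpace.toTopologicalSpace := by
  apply le_antisymm
  · exact continuous_iff_coinduced_le.mp (aux_mk_lipschitz G).continuous
  · rw [TopologicalSpace.le_def]
    intro U hU
    have hU' : IsOpen ((@Quotient.mk' X (orbSetoid G X)) ⁻¹' U) := isOpen_coinduced.mp hU
    rw [Metric.isOpen_iff]
    intro p hp
    have hpU : p.out ∈ (@Quotient.mk' X (orbSetoid G X)) ⁻¹' U := by
      show OrbQuot.mk G p.out ∈ U
      rw [aux_mk_out]; exact hp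
    obtain ⟨ε, hε, hball⟩ := Metric.isOpen_iff.mp hU' p.out hpU
    refine ⟨ε, hε, fun q hq => ?_⟩
    have hdq : orbDist G p.out q.out < ε := by
      have h3 : dist q p < ε := Metric.mem_ball.mp hq
      rw [dist_comm] at h3
      exact h3
    obtain ⟨g, hg⟩ : ∃ g : G, dist p.out (g • q.out) < ε :=
      exists_lt_of_ciInf_lt (by change orbDist G p.out q.out < _; exact hdq)
    have : g • q.out ∈ (@Quotient.mk' X (orbSetoid G X)) ⁻¹' U :=
      hball (Metric.mem_ball'.mpr hg)
    have h2 : OrbQuot.mk G (g • q.out) ∈ U := this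
    rwa [aux_mk_smul, aux_mk_out] at h2

lemma aux_compactSpace_congr {α : Type*} {t1 t2 : TopologicalSpace α} (h : t1 = t2) :
    @CompactSpace α t1 ↔ @CompactSpace α t2 := by subst h; exact Iff.rfl

end TopAux

section AuxLemmas

attribute [-instance] instTopologicalSpaceQuotient

variable {E : Type*} [NormedAddCommGroup E] [NormedSpace ℝ E]

lemma aux_orbDist_zero (x : E) : orbDist (E ≃ₗᵢ[ℝ] E) x 0 = ‖x‖ := by
  have h : ∀ g : E ≃ₗᵢ[ℝ] E, dist x (g • (0:E)) = ‖x‖ := fun g => by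
    show dist x (g 0) = ‖x‖
    rw [map_zero, dist_zero_right]
  unfold orbDist
  simp only [h]
  exact ciInf_const

lemma aux_orbDist_smul (r : ℝ) (hr : 0 ≤ r) (x y : E) :
    orbDist (E ≃ₗᵢ[ℝ] E) (r • x) (r • y) = r * orbDist (E ≃ₗᵢ[ℝ] E) x y := by
  have h : ∀ g : E ≃ₗᵢ[ℝ] E, dist (r • x) (g • (r • y)) = r * dist x (g • y) := fun g => by
    show dist (r • x) (g (r • y)) = _
    rw [g.map_smul, dist_smul₀, Real.norm_of_nonneg hr]; rfl
  unfold orbDist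
  simp only [h]
  exact (Real.mul_iInf_of_nonneg hr _).symm

lemma aux_orbDist_ball (x y : Metric.closedBall (0:E) 1) :
    orbDist (E ≃ₗᵢ[ℝ] E) x y = orbDist (E ≃ₗᵢ[ℝ] E) (x:E) (y:E) := by
  unfold orbDist
  exact iInf_congr fun g => Subtype.dist_eq x (g • y)

lemma aux_dist_mk_zero (x : E) :
    dist (OrbQuot.mk (E ≃ₗᵢ[ℝ] E) x) (OrbQuot.mk (E ≃ₗᵢ[ℝ] E) (0:E)) = ‖x‖ := by
  rw [OrbQuot.dist_mk, aux_orbDist_zero]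

/-- Forward direction: properness of `E ⫽ G₀` gives compactness of `E₁ ⫽ G₀`
(for the metric topology). -/
lemma aux_forward [CompleteSpace E] (hProper : ProperSpace (OrbQuot (E ≃ₗᵢ[ℝ] E) E)) :
    CompactSpace (OrbQuot (E ≃ₗᵢ[ℝ] E) (Metric.closedBall (0 : E) 1)) := by
  set G := E ≃ₗᵢ[ℝ] E
  set z : OrbQuot G E := OrbQuot.mk G (0:E) with hz
  have hK : IsCompact (Metric.closedBall z 1) := isCompact_closedBall z 1
  haveI : CompactSpace (Metric.closedBall z 1) := isCompact_iff_compactSpace.mp hK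
  have hout : ∀ p : Metric.closedBall z 1, ‖(p : OrbQuot G E).out‖ ≤ 1 := by
    intro p
    have h1 : dist (p : OrbQuot G E) (OrbQuot.mk G (0:E)) ≤ 1 := Metric.mem_closedBall.mp p.2
    rwa [← aux_mk_out G (p : OrbQuot G E), OrbQuot.dist_mk, aux_orbDist_zero] at h1
  set f : Metric.closedBall z 1 → OrbQuot G (Metric.closedBall (0:E) 1) :=
    fun p => OrbQuot.mk G ⟨(p : OrbQuot G E).out,
      mem_closedBall_zero_iff.mpr (hout p)⟩ with hf
  have hfiso : Isometry f := by
    refine Isometry.of_dist_eq fun p q => ?_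
    calc dist (f p) (f q)
        = orbDist G ((p : OrbQuot G E).out) ((q : OrbQuot G E).out) := by
          rw [hf, OrbQuot.dist_mk, aux_orbDist_ball]
      _ = dist (p : OrbQuot G E) (q : OrbQuot G E) := rfl
      _ = dist p q := (Subtype.dist_eq p q).symm
  have hfsurj : Function.Surjective f := by
    intro b
    have hbn : ‖(b.out : E)‖ ≤ 1 := mem_closedBall_zero_iff.mp b.out.2
    have hmem : OrbQuot.mk G (b.out : E) ∈ Metric.closedBall z 1 := by
      rw [Metric.mem_closedBall, hz, aux_dist_mk_zero]
      exact hbn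
    refine ⟨⟨OrbQuot.mk G (b.out : E), hmem⟩, ?_⟩
    have hd : dist (f ⟨OrbQuot.mk G (b.out : E), hmem⟩) b = 0 := by
      calc dist (f ⟨OrbQuot.mk G (b.out : E), hmem⟩) b
          = orbDist G ((OrbQuot.mk G (b.out : E)).out) (b.out : E) := by
            rw [hf]
            show dist (OrbQuot.mk G _) b = _
            rw [aux_dist_mk_left, aux_orbDist_ball]
        _ = dist (OrbQuot.mk G ((OrbQuot.mk G (b.out : E)).out))
              (OrbQuot.mk G (b.out : E)) := (OrbQuot.dist_mk G _ _).symm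
        _ = 0 := by rw [aux_mk_out, dist_self]
    exact dist_eq_zero.mp hd
  refine ⟨?_⟩
  rw [← Set.range_eq_univ.mpr hfsurj]
  exact isCompact_range hfiso.continuous

/-- Backward direction: compactness of `E₁ ⫽ G₀` (metric topology) gives
properness of `E ⫽ G₀`. -/
lemma aux_backward [CompleteSpace E]
    (hCompact : CompactSpace (OrbQuot (E ≃ₗᵢ[ℝ] E) (Metric.closedBall (0 : E) 1))) :
    ProperSpace (OrbQuot (E ≃ₗᵢ[ℝ] E) E) := by
  set G := E ≃ₗᵢ[ℝ] E
  set z : OrbQuot G E := OrbQuot.mk G (0:E) with hz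
  have key : ∀ r : ℝ, 0 < r → IsCompact (Metric.closedBall z r) := by
    intro r hr
    set f : OrbQuot G (Metric.closedBall (0:E) 1) → OrbQuot G E :=
      fun b => OrbQuot.mk G (r • (b.out : E)) with hf
    have hlip : LipschitzWith r.toNNReal f := by
      refine LipschitzWith.of_dist_le_mul fun b c => ?_
      rw [hf, OrbQuot.dist_mk, aux_orbDist_smul r hr.le, Real.coe_toNNReal r hr.le]
      have hd : dist b c = orbDist G ((b.out : Metric.closedBall (0:E) 1) : E)
          ((c.out : Metric.closedBall (0:E) 1) : E) := by
        rw [show dist b c = orbDist G b.out c.out from rfl, aux_orbDist_ball]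
      rw [hd]
    have hrange : Metric.closedBall z r ⊆ Set.range f := by
      intro p hp
      have hpnorm : ‖p.out‖ ≤ r := by
        have h1 : dist p (OrbQuot.mk G (0:E)) ≤ r := Metric.mem_closedBall.mp hp
        rwa [← aux_mk_out G p, OrbQuot.dist_mk, aux_orbDist_zero] at h1
      have hmem : r⁻¹ • p.out ∈ Metric.closedBall (0:E) 1 := by
        rw [mem_closedBall_zero_iff, norm_smul, norm_inv, Real.norm_of_nonneg hr.le]
        calc r⁻¹ * ‖p.out‖ ≤ r⁻¹ * r :=
              mul_le_mul_of_nonneg_left hpnorm (inv_nonneg.mpr hr.le)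
          _ = 1 := inv_mul_cancel₀ hr.ne'
      set b : OrbQuot G (Metric.closedBall (0:E) 1) :=
        OrbQuot.mk G (⟨r⁻¹ • p.out, hmem⟩ : Metric.closedBall (0:E) 1) with hb
      refine ⟨b, ?_⟩
      have h2 : dist (OrbQuot.mk G (⟨r⁻¹ • p.out, hmem⟩ : Metric.closedBall (0:E) 1)) b
          = orbDist G (⟨r⁻¹ • p.out, hmem⟩ : Metric.closedBall (0:E) 1) b.out :=
        aux_dist_mk_left G _ b
      rw [← hb, dist_self] at h2
      have hkey : orbDist G ((b.out : Metric.closedBall (0:E) 1) : E) (r⁻¹ • p.out) = 0 := by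
        calc orbDist G ((b.out : Metric.closedBall (0:E) 1) : E) (r⁻¹ • p.out)
            = orbDist G (r⁻¹ • p.out) ((b.out : Metric.closedBall (0:E) 1) : E) :=
              orbDist_comm _ _ _
          _ = orbDist G (⟨r⁻¹ • p.out, hmem⟩ : Metric.closedBall (0:E) 1) b.out :=
              (aux_orbDist_ball (⟨r⁻¹ • p.out, hmem⟩ : Metric.closedBall (0:E) 1) b.out).symm
          _ = 0 := h2.symm
      have e1 : r • (r⁻¹ • p.out) = p.out := smul_inv_smul₀ hr.ne' _
      have hd : dist (f b) p = 0 := by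
        calc dist (f b) p
            = orbDist G (r • ((b.out : Metric.closedBall (0:E) 1) : E)) p.out := by
              rw [hf]; exact aux_dist_mk_left G _ p
          _ = orbDist G (r • ((b.out : Metric.closedBall (0:E) 1) : E))
                (r • (r⁻¹ • p.out)) := by rw [e1]
          _ = r * orbDist G ((b.out : Metric.closedBall (0:E) 1) : E) (r⁻¹ • p.out) :=
              aux_orbDist_smul r hr.le _ _
          _ = r * 0 := by rw [hkey]
          _ = 0 := mul_zero r
      exact dist_eq_zero.mp hd
    exact (isCompact_range hlip.continuous).of_isClosed_subset Metric.isClosed_closedBall hrange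
  refine ⟨fun x r => ?_⟩
  have hsub : Metric.closedBall x r ⊆ Metric.closedBall z (dist x z + |r| + 1) := by
    intro y hy
    rw [Metric.mem_closedBall] at hy ⊢
    calc dist y z ≤ dist y x + dist x z := dist_triangle y x z
      _ ≤ r + dist x z := by linarith
      _ ≤ |r| + dist x z := by linarith [le_abs_self r]
      _ ≤ dist x z + |r| + 1 := by linarith
  have hpos : 0 < dist x z + |r| + 1 := by positivity
  exact (key _ hpos).of_isClosed_subset Metric.isClosed_closedBall hsub

end AuxLemmas

/-- For a real Banach space `E` with group `G₀` of surjective linear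
isometries, the quotient `E ⫽ G₀` is a proper metric space if and only if the quotient
`E₁ ⫽ G₀` of the closed unit ball is compact. -/
theorem statement14 (E : Type*) [NormedAddCommGroup E] [NormedSpace ℝ E] [CompleteSpace E] :
    ProperSpace (OrbQuot (E ≃ₗᵢ[ℝ] E) E) ↔
    CompactSpace (OrbQuot (E ≃ₗᵢ[ℝ] E) (Metric.closedBall (0 : E) 1)) := by
  rw [aux_compactSpace_congr
    (aux_topEq (E ≃ₗᵢ[ℝ] E) (X := Metric.closedBall (0 : E) 1))]
  exact ⟨aux_forward, aux_backward⟩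
end

section
/- Let (X, d) be an unbounded metric space, let G be a group acting on X by isometries, let x ∈ X, and let G_x = {g ∈ G : g·x = x}. Assume: (a) for every y ∈ X and every real α with 0 ≤ α ≤ d(x, y), there exists y' ∈ X with d(x, y') = α and d(y', y) = d(x, y) − α; and (b) for all y, y' ∈ X with d(x, y) = d(x, y'), there exists g ∈ G_x with g·y = y'. Then the map X ⫽ G_x → [0, ∞) sending the G_x-orbit closure [y] to d(x, y) is a well-defined surjective isometry; in particular, X ⫽ G_x is a proper metric space. -/
set_option linter.unusedSectionVars false

open Metric MulAction Filter Set Topology Pointwise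

theorem properSpace_of_dist_eq_abs {α : Type*} [MetricSpace α] (f : α → ℝ)
    (hd : ∀ p q : α, dist p q = |f p - f q|) (h0 : ∀ p, 0 ≤ f p)
    (hs : ∀ t : ℝ, 0 ≤ t → ∃ p, f p = t) : ProperSpace α := by
  have finj : Function.Injective f := by
    intro p q h
    have : dist p q = 0 := by rw [hd, h, sub_self, abs_zero]
    exact dist_eq_zero.mp this
  have hsur : ∀ t : ℝ, ∃ p : α, f p = max t 0 := fun t => hs (max t 0) (le_max_right t 0)
  set ψ : ℝ → α := fun t => (hsur t).choose with hψdef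
  have hψ : ∀ t, f (ψ t) = max t 0 := fun t => (hsur t).choose_spec
  have hψcont : Continuous ψ := by
    apply LipschitzWith.continuous (K := 1)
    intro s t
    rw [ENNReal.coe_one, one_mul, edist_dist, edist_dist, hd]
    have h1 : |f (ψ s) - f (ψ t)| ≤ |s - t| := by
      rw [hψ, hψ]; exact abs_max_sub_max_le_abs s t 0
    exact ENNReal.ofReal_le_ofReal (by rwa [Real.dist_eq])
  constructor
  intro p r
  apply IsCompact.of_isClosed_subset
    ((isCompact_Icc (a := f p - r) (b := f p + r)).image hψcont) Metric.isClosed_closedBall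
  intro q hq
  rw [Metric.mem_closedBall, hd] at hq
  have hq0 : 0 ≤ f q := h0 q
  have habs := abs_le.mp hq
  refine ⟨f q, ⟨by linarith [habs.2], by linarith [habs.1]⟩, ?_⟩
  apply finj
  rw [hψ, max_eq_left hq0]

/-- Let `X` be an unbounded metric space with an isometric `G`-action, and
`x ∈ X` a point such that geodesics from `x` exist and the stabiliser `G_x` acts transitively
on spheres around `x`.  Then `[y] ↦ d(x, y)` is a well-defined surjective isometry from
`X ⫽ G_x` onto `[0, ∞)`; in particular `X ⫽ G_x` is proper. -/
theorem statement15 (G X : Type*) [Group G] [MetricSpace X] [MulAction G X]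
    [IsIsometricSMul G X]
    (hunbdd : ∀ C : ℝ, ∃ y z : X, C < dist y z) (x : X)
    (hgeo : ∀ (y : X) (α : ℝ), 0 ≤ α → α ≤ dist x y →
      ∃ y' : X, dist x y' = α ∧ dist y' y = dist x y - α)
    (hhom : ∀ y y' : X, dist x y = dist x y' → ∃ g : G, g • x = x ∧ g • y = y') :
    (∀ y y' : X,
      OrbQuot.mk (MulAction.stabilizer G x) y = OrbQuot.mk (MulAction.stabilizer G x) y' →
      dist x y = dist x y') ∧
    (∀ y : X, dist x (Quotient.out (OrbQuot.mk (MulAction.stabilizer G x) y)) = dist x y) ∧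
    (∀ r : ℝ, 0 ≤ r →
      ∃ p : OrbQuot (MulAction.stabilizer G x) X, dist x (Quotient.out p) = r) ∧
    (∀ p q : OrbQuot (MulAction.stabilizer G x) X,
      dist p q = |dist x (Quotient.out p) - dist x (Quotient.out q)|) ∧
    ProperSpace (OrbQuot (MulAction.stabilizer G x) X) := by
  set H := MulAction.stabilizer G x with hH
  -- distance to x is invariant under H
  have hconst : ∀ (h : H) (y : X), dist x (h • y) = dist x y := by
    intro h y
    have hx : (h : G) • x = x := h.2
    show dist x ((h : G) • y) = dist x y
    calc dist x ((h : G) • y) = dist ((h : G) • x) ((h : G) • y) := by rw [hx]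
      _ = dist x y := dist_smul _ _ _
  -- key formula for orbDist
  have key : ∀ y y' : X, orbDist H y y' = |dist x y - dist x y'| := by
    have upper : ∀ y y' : X, dist x y' ≤ dist x y →
        orbDist H y y' ≤ dist x y - dist x y' := by
      intro y y' hle
      obtain ⟨y'', hy''1, hy''2⟩ := hgeo y (dist x y') dist_nonneg hle
      obtain ⟨g, hg1, hg2⟩ := hhom y' y'' hy''1.symm
      have hgH : g ∈ H := by rwa [hH, MulAction.mem_stabilizer_iff]
      have := orbDist_le H y y' ⟨g, hgH⟩
      have hsm : (⟨g, hgH⟩ : H) • y' = y'' := hg2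
      rw [hsm] at this
      calc orbDist H y y' ≤ dist y y'' := this
        _ = dist x y - dist x y' := by rw [dist_comm]; exact hy''2
    intro y y'
    apply le_antisymm
    · rcases le_total (dist x y') (dist x y) with h | h
      · rw [abs_of_nonneg (by linarith)]; exact upper y y' h
      · rw [abs_of_nonpos (by linarith), orbDist_comm]
        have := upper y' y h
        linarith
    · refine le_ciInf fun g => ?_
      have h1 : dist x (g • y') = dist x y' := hconst g y'
      calc |dist x y - dist x y'| = |dist x y - dist x (g • y')| := by rw [h1]
        _ ≤ dist y (g • y') := by
            have := abs_dist_sub_le y (g • y') x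
            rw [dist_comm y x, dist_comm (g • y') x] at this
            exact this
  have hdistmk : ∀ y y' : X,
      dist (OrbQuot.mk H y) (OrbQuot.mk H y') = |dist x y - dist x y'| := by
    intro y y'; rw [OrbQuot.dist_mk, key]
  -- part 1
  have part1 : ∀ y y' : X, OrbQuot.mk H y = OrbQuot.mk H y' → dist x y = dist x y' := by
    intro y y' h
    have : dist (OrbQuot.mk H y) (OrbQuot.mk H y') = 0 := by rw [h, dist_self]
    rw [hdistmk] at this
    have := abs_eq_zero.mp this
    linarith
  -- part 2
  have part2 : ∀ y : X, dist x (Quotient.out (OrbQuot.mk H y)) = dist x y := by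
    intro y
    exact part1 _ _ (Quotient.out_eq _)
  -- part 3
  have part3 : ∀ r : ℝ, 0 ≤ r → ∃ p : OrbQuot H X, dist x (Quotient.out p) = r := by
    intro r hr
    obtain ⟨y, z, hyz⟩ := hunbdd (2 * r)
    have : r ≤ dist x y ∨ r ≤ dist x z := by
      by_contra hc
      push_neg at hc
      have := dist_triangle y x z
      rw [dist_comm y x] at this
      linarith
    obtain ⟨w, hw⟩ : ∃ w : X, r ≤ dist x w := this.elim (fun h => ⟨y, h⟩) (fun h => ⟨z, h⟩)
    obtain ⟨y', hy'1, _⟩ := hgeo w r hr hw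
    exact ⟨OrbQuot.mk H y', by rw [part2, hy'1]⟩
  -- part 4
  have part4 : ∀ p q : OrbQuot H X,
      dist p q = |dist x (Quotient.out p) - dist x (Quotient.out q)| := by
    intro p q
    have := hdistmk (Quotient.out p) (Quotient.out q)
    rwa [show OrbQuot.mk H (Quotient.out p) = p from Quotient.out_eq p,
      show OrbQuot.mk H (Quotient.out q) = q from Quotient.out_eq q] at this
  exact ⟨part1, part2, part3, part4,
    properSpace_of_dist_eq_abs (fun p => dist x (Quotient.out p)) part4
      (fun p => dist_nonneg) part3⟩
end
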